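/- arXiv:2506.00465 — 2 statements merged into one kernel-verified Lean document; each statement's English description precedes it below -/
import Mathlib

section
/- Suppose φ is 1-coercive and f : X → ℝ ∪ {±∞} is proper, lsc on X, and φ-prox-bounded with threshold λ_f. Then for every λ ∈ (0, λ_f): (i) env_λ f(y) ∈ ℝ and prox_{λf}(y) ≠ ∅ for every y ∈ Y, i.e. dom env_λ f = dom prox_{λf} = Y; (ii) env_λ f : Y → ℝ is continuous; (iii) prox_{λf} : Y ⇉ X is compact-valued and usc; in particular it is locally bounded and osc, and its graph is closed in Y × ℝⁿ. -/
open Filter Topology Bornology Set RealInnerProductSpace Classical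

noncomputable section

namespace BregmanPaper

/-- Euclidean space `ℝⁿ`. -/
abbrev Eucl (n : ℕ) := EuclideanSpace ℝ (Fin n)

variable {n : ℕ}

/-! ### Set-valued operators between subsets of `ℝⁿ` -/

/-- `T : X ⇉ Y` is locally bounded at `x` (relative to `X`): some neighborhood `N` of `x`
in `X` has bounded image `T(N)`. -/
def LocBddAt (X : Set (Eucl n)) (T : Eucl n → Set (Eucl n)) (x : Eucl n) : Prop :=
  ∃ N : Set (Eucl n), N ⊆ X ∧ N ∈ 𝓝[X] x ∧ IsBounded (⋃ x' ∈ N, T x')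

/-- `T : X ⇉ Y` is upper semicontinuous at `x`: for every open `V ⊇ T(x)` there is a
neighborhood `N` of `x` in `X` with `T(N) ⊆ V`. -/
def UscAt (X : Set (Eucl n)) (T : Eucl n → Set (Eucl n)) (x : Eucl n) : Prop :=
  ∀ V : Set (Eucl n), IsOpen V → T x ⊆ V →
    ∃ N : Set (Eucl n), N ⊆ X ∧ N ∈ 𝓝[X] x ∧ (⋃ x' ∈ N, T x') ⊆ V

/-- `T : X ⇉ Y` is outer semicontinuous at `x`: every `y ∈ Y` which is the limit of a
sequence `yᵏ ∈ T(xᵏ)` with `X ∋ xᵏ → x` belongs to `T(x)`. -/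
def OscAt (X Y : Set (Eucl n)) (T : Eucl n → Set (Eucl n)) (x : Eucl n) : Prop :=
  ∀ y ∈ Y, ∀ u v : ℕ → Eucl n, (∀ k, u k ∈ X) → (∀ k, v k ∈ T (u k)) →
    Tendsto u atTop (𝓝 x) → Tendsto v atTop (𝓝 y) → y ∈ T x

/-- (effective) domain of a set-valued operator on `X`. -/
def svDom (X : Set (Eucl n)) (T : Eucl n → Set (Eucl n)) : Set (Eucl n) :=
  {x ∈ X | (T x).Nonempty}

/-- graph of a set-valued operator on `X`. -/
def svGraph (X : Set (Eucl n)) (T : Eucl n → Set (Eucl n)) : Set (Eucl n × Eucl n) :=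
  {p | p.1 ∈ X ∧ p.2 ∈ T p.1}

/-! ### Extended-real-valued functions on subsets of `ℝⁿ` -/

/-- Canonical extension of `f : X → ℝ̄`, set to `∞` outside `X`. -/
def cExt (X : Set (Eucl n)) (f : Eucl n → EReal) : Eucl n → EReal :=
  fun x => if x ∈ X then f x else ⊤

/-- `f : X → ℝ̄` is proper: not identically `∞` and nowhere `-∞` (on `X`). -/
def ProperOn (X : Set (Eucl n)) (f : Eucl n → EReal) : Prop :=
  (∃ x ∈ X, f x ≠ ⊤) ∧ ∀ x ∈ X, f x ≠ ⊥

/-- Convexity of an extended-real-valued function on a set. -/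
def ConvexOnE (S : Set (Eucl n)) (f : Eucl n → EReal) : Prop :=
  ∀ x ∈ S, ∀ y ∈ S, ∀ a b : ℝ, 0 ≤ a → 0 ≤ b → a + b = 1 →
    f (a • x + b • y) ≤ (a : EReal) * f x + (b : EReal) * f y

/-- Strict convexity of an extended-real-valued function on a set. -/
def StrictConvexOnE (S : Set (Eucl n)) (f : Eucl n → EReal) : Prop :=
  ∀ x ∈ S, ∀ y ∈ S, x ≠ y → ∀ a b : ℝ, 0 < a → 0 < b → a + b = 1 →
    f (a • x + b • y) < (a : EReal) * f x + (b : EReal) * f y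

/-- Lower semicontinuous hull of `f` relative to `X`: `cl f (x) = liminf_{X ∋ x' → x} f x'`. -/
def lscHullOn (X : Set (Eucl n)) (f : Eucl n → EReal) : Eucl n → EReal :=
  fun x => Filter.liminf f (𝓝[X] x)

/-- Convex hull of `f` relative to `X`: pointwise supremum of all convex minorants on `X`. -/
def convHullOn (X : Set (Eucl n)) (f : Eucl n → EReal) : Eucl n → EReal :=
  fun x => sSup {v : EReal | ∃ g : Eucl n → EReal,
    ConvexOnE X g ∧ (∀ y ∈ X, g y ≤ f y) ∧ v = g x}

/-- Closed convex hull of `f` relative to `X`: pointwise supremum of all convex minorants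
on `X` that are additionally lsc on `X`. -/
def cconvHullOn (X : Set (Eucl n)) (f : Eucl n → EReal) : Eucl n → EReal :=
  fun x => sSup {v : EReal | ∃ g : Eucl n → EReal,
    ConvexOnE X g ∧ LowerSemicontinuousOn g X ∧ (∀ y ∈ X, g y ≤ f y) ∧ v = g x}

/-- Fenchel conjugate of `h : ℝⁿ → ℝ̄`. -/
def fconj (h : Eucl n → EReal) : Eucl n → EReal :=
  fun y => ⨆ x : Eucl n, ((⟪x, y⟫ : ℝ) : EReal) - h x

/-- Fenchel subdifferential of `f` at `x`, relative to the set `X`. -/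
def fsubdiff (X : Set (Eucl n)) (f : Eucl n → EReal) (x : Eucl n) : Set (Eucl n) :=
  {u : Eucl n | ∀ x' ∈ X, f x + ((⟪u, x' - x⟫ : ℝ) : EReal) ≤ f x'}

/-- Set of minimizers of `h` over `S`. -/
def argminOn (S : Set (Eucl n)) (h : Eucl n → EReal) : Set (Eucl n) :=
  {x ∈ S | ∀ x' ∈ S, h x ≤ h x'}

/-- `h` is 1-coercive: `h(x)/‖x‖ → ∞` as `‖x‖ → ∞`. -/
def OneCoercive (h : Eucl n → EReal) : Prop :=
  ∀ M : ℝ, ∃ R : ℝ, ∀ x : Eucl n, R ≤ ‖x‖ → ((M * ‖x‖ : ℝ) : EReal) ≤ h x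

/-- `h` is coercive: `h(x) → ∞` as `‖x‖ → ∞`. -/
def CoerciveE (h : Eucl n → EReal) : Prop :=
  ∀ M : ℝ, ∃ R : ℝ, ∀ x : Eucl n, R ≤ ‖x‖ → ((M : ℝ) : EReal) ≤ h x

/-! ### Distance generating functions and Bregman objects -/

/-- Effective domain of an `EReal`-valued function. -/
def edom (φ : Eucl n → EReal) : Set (Eucl n) := {x | φ x ≠ ⊤}

/-- `φ` is a distance generating function with gradient `φ'` on the interior of its domain:
proper, lsc, convex, and differentiable on `int dom φ ≠ ∅`. -/
structure IsDGF (φ : Eucl n → EReal) (φ' : Eucl n → Eucl n) : Prop where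
  nonempty_dom : ∃ x, φ x ≠ ⊤
  ne_bot : ∀ x, φ x ≠ ⊥
  lsc : LowerSemicontinuous φ
  convex : ConvexOnE Set.univ φ
  int_nonempty : (interior (edom φ)).Nonempty
  diff : ∀ x ∈ interior (edom φ), HasGradientAt (fun z => (φ z).toReal) (φ' x) x

/-- Essential smoothness of `φ` (with gradient `φ'`). -/
def EssSmooth (φ : Eucl n → EReal) (φ' : Eucl n → Eucl n) : Prop :=
  (interior (edom φ)).Nonempty ∧
  (∀ x ∈ interior (edom φ), HasGradientAt (fun z => (φ z).toReal) (φ' x) x) ∧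
  ∀ (u : ℕ → Eucl n) (x : Eucl n), (∀ k, u k ∈ interior (edom φ)) →
    x ∈ frontier (edom φ) → Tendsto u atTop (𝓝 x) →
    Tendsto (fun k => ‖φ' (u k)‖) atTop atTop

/-- `φ` is Legendre: essentially smooth and essentially strictly convex. -/
def Legendre (φ : Eucl n → EReal) (φ' : Eucl n → Eucl n) : Prop :=
  EssSmooth φ φ' ∧
  ∀ S : Set (Eucl n), S ⊆ {x | (fsubdiff Set.univ φ x).Nonempty} → Convex ℝ S →
    StrictConvexOnE S φ

/-- Bregman distance induced by `φ` (with gradient `φ'`). -/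
def breg (φ : Eucl n → EReal) (φ' : Eucl n → Eucl n) (x y : Eucl n) : EReal :=
  if y ∈ interior (edom φ) then φ x - φ y - ((⟪φ' y, x - y⟫ : ℝ) : EReal) else ⊤

/-- Left Bregman–Moreau envelope `env_λ f`. -/
def benv (φ : Eucl n → EReal) (φ' : Eucl n → Eucl n) (lam : ℝ) (f : Eucl n → EReal)
    (y : Eucl n) : EReal :=
  ⨅ x ∈ edom φ, (f x + ((lam⁻¹ : ℝ) : EReal) * breg φ φ' x y)

/-- Left Bregman proximal mapping `prox_{λ f}`. -/
def bprox (φ : Eucl n → EReal) (φ' : Eucl n → Eucl n) (lam : ℝ) (f : Eucl n → EReal)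
    (y : Eucl n) : Set (Eucl n) :=
  argminOn (edom φ) (fun x => f x + ((lam⁻¹ : ℝ) : EReal) * breg φ φ' x y)

/-- Right Bregman–Moreau envelope `env*_λ g`. -/
def benvR (φ : Eucl n → EReal) (φ' : Eucl n → Eucl n) (lam : ℝ) (g : Eucl n → EReal)
    (x : Eucl n) : EReal :=
  ⨅ y ∈ interior (edom φ), (g y + ((lam⁻¹ : ℝ) : EReal) * breg φ φ' x y)

/-- Right Bregman proximal mapping `prox*_{λ g}`. -/
def bproxR (φ : Eucl n → EReal) (φ' : Eucl n → Eucl n) (lam : ℝ) (g : Eucl n → EReal)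
    (x : Eucl n) : Set (Eucl n) :=
  argminOn (interior (edom φ)) (fun y => g y + ((lam⁻¹ : ℝ) : EReal) * breg φ φ' x y)

/-- Left Bregman proximal hull `hull_λ f = −env*_λ(−env_λ f)`. -/
def bhull (φ : Eucl n → EReal) (φ' : Eucl n → Eucl n) (lam : ℝ) (f : Eucl n → EReal) :
    Eucl n → EReal :=
  fun x => - benvR φ φ' lam (fun y => - benv φ φ' lam f y) x

/-- Right Bregman proximal hull `hull*_λ g = −env_λ(−env*_λ g)`. -/
def bhullR (φ : Eucl n → EReal) (φ' : Eucl n → Eucl n) (lam : ℝ) (g : Eucl n → EReal) :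
    Eucl n → EReal :=
  fun y => - benv φ φ' lam (fun x => - benvR φ φ' lam g x) y

/-- `f` is `φ`-prox-bounded for the parameter `lam`. -/
def ProxBddBelow (φ : Eucl n → EReal) (φ' : Eucl n → Eucl n) (lam : ℝ)
    (f : Eucl n → EReal) : Prop :=
  ∃ y ∈ interior (edom φ), benv φ φ' lam f y ≠ ⊥

/-- `g` is right `φ`-prox-bounded for the parameter `lam`. -/
def ProxBddBelowR (φ : Eucl n → EReal) (φ' : Eucl n → Eucl n) (lam : ℝ)
    (g : Eucl n → EReal) : Prop :=
  ∃ x ∈ edom φ, benvR φ φ' lam g x ≠ ⊥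

/-- The (left) `φ`-prox-boundedness threshold `λ_f` of `f` (in `[0,∞]`). -/
def pbThreshold (φ : Eucl n → EReal) (φ' : Eucl n → Eucl n) (f : Eucl n → EReal) :
    ENNReal :=
  ⨆ l ∈ {l : ℝ | 0 < l ∧ ProxBddBelow φ φ' l f}, ENNReal.ofReal l

/-- The right `φ`-prox-boundedness threshold `λ̄_g` of `g` (in `[0,∞]`). -/
def pbThresholdR (φ : Eucl n → EReal) (φ' : Eucl n → Eucl n) (g : Eucl n → EReal) :
    ENNReal :=
  ⨆ l ∈ {l : ℝ | 0 < l ∧ ProxBddBelowR φ φ' l g}, ENNReal.ofReal l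

/-- Epi-composition `(∇φ ▷ g)(ξ) = inf {g(y) : y ∈ Y, ∇φ(y) = ξ}`. -/
def epicomp (φ' : Eucl n → Eucl n) (Y : Set (Eucl n)) (g : Eucl n → EReal) :
    Eucl n → EReal :=
  fun ξ => ⨅ y ∈ {y ∈ Y | φ' y = ξ}, g y

/-- Indicator function (in the `EReal` sense) of a set. -/
def indicatorE (S : Set (Eucl n)) : Eucl n → EReal := fun x => if x ∈ S then 0 else ⊤

/-! ### Euclidean proximal objects -/

/-- Euclidean Moreau envelope. -/
def eEnv (lam : ℝ) (h : Eucl n → EReal) (v : Eucl n) : EReal :=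
  ⨅ x : Eucl n, (h x + (((2 * lam)⁻¹ * ‖x - v‖ ^ 2 : ℝ) : EReal))

/-- Euclidean proximal mapping. -/
def eProx (lam : ℝ) (h : Eucl n → EReal) (v : Eucl n) : Set (Eucl n) :=
  argminOn Set.univ (fun x => h x + (((2 * lam)⁻¹ * ‖x - v‖ ^ 2 : ℝ) : EReal))

/-- Euclidean proximal hull. -/
def eHull (lam : ℝ) (h : Eucl n → EReal) : Eucl n → EReal :=
  fun v => - eEnv lam (fun w => - eEnv lam h w) v

end BregmanPaper

/-!
Fix `μ ∈ (λ, λ_f)` and `y₀ ∈ Y` with `f x + μ⁻¹ D(x, y₀) ≥ β` on `X`. For `y ∈ Y` and `x ∈ X`,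
`f x + λ⁻¹ D(x, y) = [f x + μ⁻¹ D(x, y₀)] + (λ⁻¹ - μ⁻¹) φ x + ℓ(y, x)` with `ℓ` affine in `x` and
continuous in `y` (the gradient of a differentiable convex function is continuous). The middle
term is a positive multiple of the 1-coercive `φ`, so the objective is level-bounded in `x`
locally uniformly in `y`, and, extended by `+∞` off `X`, jointly lsc on `Y × ℝⁿ`. These are
the hypotheses of the parametric minimization theorem (Rockafellar–Wets, Thm. 1.17), which
yields (i), (ii), compactness and local boundedness of the argmin map and closedness of its
graph; closed graph plus local boundedness in `ℝⁿ` gives upper semicontinuity by a tube lemma.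
-/

theorem HasGradientAt.tendsto_slope {F : Type*} [NormedAddCommGroup F] [InnerProductSpace ℝ F]
    [CompleteSpace F] {g : F → ℝ} {g' z : F} (h : HasGradientAt g g' z) (v : F) :
    Tendsto (fun t : ℝ => (g (z + t • v) - g z) / t) (𝓝[>] 0) (𝓝 ⟪g', v⟫) := by
  have hline : HasDerivAt (fun t : ℝ => z + t • v) v 0 := by
    simpa using ((hasDerivAt_id (0 : ℝ)).smul_const v).const_add z
  have hcomp := (zero_smul ℝ v ▸ add_zero z ▸ h.hasFDerivAt).comp_hasDerivAt 0 hline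
  rw [InnerProductSpace.toDual_apply_apply] at hcomp
  refine ((hasDerivAt_iff_tendsto_slope.1 hcomp).mono_left
    (nhdsWithin_mono 0 fun t (ht : 0 < t) => ht.ne')).congr fun t => ?_
  simp [slope_def_field]

theorem HasGradientAt.eq_of_le {F : Type*} [NormedAddCommGroup F] [InnerProductSpace ℝ F]
    [CompleteSpace F] {g : F → ℝ} {g' z u : F} (h : HasGradientAt g g' z)
    (hu : ∀ᶠ x in 𝓝 z, g z + ⟪u, x - z⟫ ≤ g x) : u = g' := by
  have hdir : ∀ v, ⟪u, v⟫ ≤ ⟪g', v⟫ := fun v => by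
    have hline : Tendsto (fun t : ℝ => z + t • v) (𝓝[>] 0) (𝓝 z) :=
      tendsto_nhdsWithin_of_tendsto_nhds <|
        (by fun_prop : Continuous fun t : ℝ => z + t • v).tendsto' 0 z (by simp)
    refine ge_of_tendsto (h.tendsto_slope v) ?_
    filter_upwards [hline.eventually hu, self_mem_nhdsWithin] with t ht (htpos : 0 < t)
    rw [le_div_iff₀ htpos]
    simpa [real_inner_smul_right, mul_comm] using sub_le_sub_right ht (g z)
  have := hdir (u - g')
  rwa [← sub_nonpos, ← inner_sub_left, real_inner_self_nonpos, sub_eq_zero] at this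

theorem mul_norm_le_of_forall_inner_le {F : Type*} [NormedAddCommGroup F] [InnerProductSpace ℝ F]
    {a : F} {r C : ℝ} (hr : 0 ≤ r) (h : ∀ v, ‖v‖ ≤ r → ⟪a, v⟫ ≤ C) : r * ‖a‖ ≤ C := by
  have hv : ‖(r * ‖a‖⁻¹) • a‖ ≤ r := by
    rw [norm_smul, Real.norm_eq_abs, abs_of_nonneg (by positivity), mul_assoc]
    exact mul_le_of_le_one_right hr (inv_mul_le_one_of_le₀ le_rfl (norm_nonneg a))
  convert h _ hv using 1
  rw [real_inner_smul_right, real_inner_self_eq_norm_sq]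
  rcases eq_or_ne ‖a‖ 0 with ha | ha
  · simp [ha]
  · field_simp

theorem lowerSemicontinuous_ite_add {α : Type*} [TopologicalSpace α] {S : Set α}
    {u v : α → EReal} (hu : LowerSemicontinuousOn u S)
    (hu_bdd : ∀ x, ∃ β : ℝ, ∀ᶠ z in 𝓝 x, z ∈ S → (β : EReal) ≤ u z)
    (hv : LowerSemicontinuous v) (hv_bot : ∀ x, v x ≠ ⊥) (hv_top : ∀ x ∉ S, v x = ⊤) :
    LowerSemicontinuous fun x => if x ∈ S then u x + v x else ⊤ := by
  intro x t ht
  change t < if x ∈ S then u x + v x else ⊤ at ht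
  show ∀ᶠ z in 𝓝 x, t < if z ∈ S then u z + v z else ⊤
  obtain ⟨β, hβ⟩ := hu_bdd x
  by_cases hx : x ∈ S
  · rw [if_pos hx] at ht
    have hsum : LowerSemicontinuousWithinAt (fun z => u z + v z) S x :=
      (hu.lowerSemicontinuousWithinAt hx).add' (hv.lowerSemicontinuousWithinAt S x) <|
        EReal.continuousAt_add (Or.inr (hv_bot x))
          (Or.inl (ne_bot_of_le_ne_bot (EReal.coe_ne_bot β) (hβ.self_of_nhds hx)))
    filter_upwards [eventually_nhdsWithin_iff.1 (hsum t ht)] with z hz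
    split_ifs with hzS
    · exact hz hzS
    · exact ht.trans_le le_top
  · rw [if_neg hx] at ht
    obtain ⟨r, htr, -⟩ := EReal.exists_between_coe_real ht
    have hvx : ((r - β : ℝ) : EReal) < v x := by rw [hv_top x hx]; exact EReal.coe_lt_top _
    filter_upwards [hv x _ hvx, hβ] with z hz hzβ
    split_ifs with hzS
    · calc t < r := htr
        _ = β + ((r - β : ℝ) : EReal) := by rw [← EReal.coe_add, add_sub_cancel]
        _ < β + v z := EReal.add_lt_add_left_coe hz β
        _ ≤ u z + v z := add_le_add_left (hzβ hzS) _
    · exact ht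

theorem LowerSemicontinuousAt.congr_of_eventuallyEq {α β : Type*} [TopologicalSpace α]
    [Preorder β] {f g : α → β} {x : α} (h : LowerSemicontinuousAt f x) (hfg : f =ᶠ[𝓝 x] g) :
    LowerSemicontinuousAt g x := by
  rw [← lowerSemicontinuousWithinAt_univ_iff] at h ⊢
  exact h.congr_of_eventuallyEq (mem_univ x) (by rwa [nhdsWithin_univ])

theorem EReal.exists_coe_le_of_iInf_ne_bot {α : Type*} {S : Set α} {g : α → EReal}
    (h : ⨅ x ∈ S, g x ≠ ⊥) : ∃ β : ℝ, ∀ x ∈ S, (β : EReal) ≤ g x := by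
  obtain ⟨β, -, hβ⟩ := EReal.lt_iff_exists_real_btwn.1 (bot_lt_iff_ne_bot.2 h)
  exact ⟨β, fun x hx => hβ.le.trans (iInf₂_le x hx)⟩

theorem LowerSemicontinuous.coe_mul {α : Type*} [TopologicalSpace α] {g : α → EReal} {c : ℝ}
    (hc : 0 < c) (hg : LowerSemicontinuous g) : LowerSemicontinuous fun z => (c : EReal) * g z := by
  have hmul : ∀ b : EReal, ContinuousAt (fun p : EReal × EReal => p.1 * p.2) (c, b) := fun b =>
    EReal.continuousAt_mul (Or.inl (EReal.coe_ne_zero.2 hc.ne'))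
      (Or.inl (EReal.coe_ne_zero.2 hc.ne')) (Or.inl (EReal.coe_ne_bot c))
      (Or.inl (EReal.coe_ne_top c))
  have hcont : Continuous fun b : EReal => (c : EReal) * b := continuous_iff_continuousAt.2
    fun b => (hmul b).comp (continuous_const.prodMk continuous_id).continuousAt
  exact hcont.comp_lowerSemicontinuous hg fun _ _ h =>
    mul_le_mul_of_nonneg_left h (by exact_mod_cast hc.le)

namespace BregmanPaper

variable {n : ℕ}

theorem mem_argminOn_iff_le_iInf {S : Set (Eucl n)} {h : Eucl n → EReal} {x : Eucl n} :
    x ∈ argminOn S h ↔ x ∈ S ∧ h x ≤ ⨅ x' ∈ S, h x' := by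
  simp only [argminOn, mem_ofPred_eq, le_iInf₂_iff]

/-- The hypotheses of the parametric minimization theorem (Rockafellar–Wets, Thm. 1.17) for
`y ↦ ⨅ x ∈ X, F y x` at the parameters in `Y`, plus upper semicontinuity in the parameter. -/
structure IsRegularParametric (X Y : Set (Eucl n)) (F : Eucl n → Eucl n → EReal) : Prop where
  lsc : ∀ w ∈ Y, ∀ x, LowerSemicontinuousAt (fun q : Eucl n × Eucl n => cExt X (F q.1) q.2) (w, x)
  levelBdd : ∀ w ∈ Y, ∃ A : ℝ, ∀ᶠ y in 𝓝 w, ∀ x ∈ X, ((‖x‖ - A : ℝ) : EReal) ≤ F y x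
  usc : ∀ w ∈ Y, ∀ x ∈ X, UpperSemicontinuousAt (fun y => F y x) w
  exists_ne_top : ∀ w ∈ Y, ∃ x ∈ X, F w x ≠ ⊤

namespace IsRegularParametric

variable {X Y : Set (Eucl n)} {F : Eucl n → Eucl n → EReal} {w : Eucl n}

theorem iInf_ne_top (hF : IsRegularParametric X Y F) (hw : w ∈ Y) : ⨅ x ∈ X, F w x ≠ ⊤ := by
  obtain ⟨x, hxX, hx⟩ := hF.exists_ne_top w hw
  exact ne_top_of_le_ne_top hx (iInf₂_le x hxX)

theorem iInf_ne_bot (hF : IsRegularParametric X Y F) (hw : w ∈ Y) : ⨅ x ∈ X, F w x ≠ ⊥ := by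
  obtain ⟨A, hA⟩ := hF.levelBdd w hw
  refine ne_bot_of_le_ne_bot (EReal.coe_ne_bot (-A)) (le_iInf₂ fun x hx => ?_)
  exact (EReal.coe_le_coe_iff.2 (by linarith [norm_nonneg x])).trans (hA.self_of_nhds x hx)

theorem upperSemicontinuousAt_iInf (hF : IsRegularParametric X Y F) (hw : w ∈ Y) :
    UpperSemicontinuousAt (fun y => ⨅ x ∈ X, F y x) w := by
  intro t ht
  obtain ⟨x, hx⟩ := iInf_lt_iff.1 ht
  obtain ⟨hxX, hxt⟩ := iInf_lt_iff.1 hx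
  filter_upwards [hF.usc w hw x hxX t hxt] with y hy
  exact (iInf₂_le x hxX).trans_lt hy

theorem lowerSemicontinuousAt_iInf (hF : IsRegularParametric X Y F) (hw : w ∈ Y) :
    LowerSemicontinuousAt (fun y => ⨅ x ∈ X, F y x) w := by
  intro t ht
  obtain ⟨s, hts, hs⟩ := EReal.lt_iff_exists_real_btwn.1 ht
  obtain ⟨A, hA⟩ := hF.levelBdd w hw
  have hK : ∀ᶠ y in 𝓝 w, ∀ x ∈ Metric.closedBall (0 : Eucl n) (s + A),
      (s : EReal) < cExt X (F y) x := by
    refine (isCompact_closedBall _ _).eventually_forall_of_forall_eventually fun x _ =>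
      hF.lsc w hw x _ (hs.trans_le ?_)
    show ⨅ x ∈ X, F w x ≤ cExt X (F w) x
    unfold cExt
    split_ifs with hxX
    · exact iInf₂_le x hxX
    · exact le_top
  filter_upwards [hK, hA] with y hyK hyA
  refine hts.trans_le (le_iInf₂ fun x hxX => ?_)
  by_cases hx : ‖x‖ ≤ s + A
  · simpa [cExt, hxX] using (hyK x (mem_closedBall_zero_iff.2 hx)).le
  · exact (EReal.coe_le_coe_iff.2 (by linarith)).trans (hyA x hxX)

theorem continuousAt_iInf (hF : IsRegularParametric X Y F) (hw : w ∈ Y) :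
    ContinuousAt (fun y => ⨅ x ∈ X, F y x) w :=
  continuousAt_iff_lower_upperSemicontinuousAt.2
    ⟨hF.lowerSemicontinuousAt_iInf hw, hF.upperSemicontinuousAt_iInf hw⟩

theorem lowerSemicontinuous_cExt (hF : IsRegularParametric X Y F) (hw : w ∈ Y) :
    LowerSemicontinuous (cExt X (F w)) := fun x =>
  (hF.lsc w hw x).comp (g := fun x => (w, x)) (continuousAt_const.prodMk continuousAt_id)

theorem mem_argminOn_iff (hF : IsRegularParametric X Y F) (hw : w ∈ Y) {x : Eucl n} :
    x ∈ argminOn X (F w) ↔ cExt X (F w) x ≤ ⨅ x ∈ X, F w x := by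
  rw [mem_argminOn_iff_le_iInf, cExt]
  split_ifs with hx
  · exact and_iff_right hx
  · simpa [hx] using hF.iInf_ne_top hw

theorem eventually_argminOn_subset (hF : IsRegularParametric X Y F) (hw : w ∈ Y) :
    ∃ R, ∀ᶠ y in 𝓝 w, argminOn X (F y) ⊆ Metric.closedBall 0 R := by
  obtain ⟨r, hr⟩ : ∃ r : ℝ, ⨅ x ∈ X, F w x = r :=
    ⟨_, (EReal.coe_toReal (hF.iInf_ne_top hw) (hF.iInf_ne_bot hw)).symm⟩
  obtain ⟨A, hA⟩ := hF.levelBdd w hw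
  refine ⟨r + 1 + A, ?_⟩
  filter_upwards [hF.upperSemicontinuousAt_iInf hw (r + 1 : ℝ)
    (show ⨅ x ∈ X, F w x < (r + 1 : ℝ) by rw [hr]; exact EReal.coe_lt_coe_iff.2 (lt_add_one r)),
    hA] with y hyr hyA x hx
  rw [mem_argminOn_iff_le_iInf] at hx
  have := ((hyA x hx.1).trans hx.2).trans_lt hyr
  rw [EReal.coe_lt_coe_iff] at this
  exact mem_closedBall_zero_iff.2 (by linarith)

theorem argminOn_nonempty (hF : IsRegularParametric X Y F) (hw : w ∈ Y) :
    (argminOn X (F w)).Nonempty := by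
  obtain ⟨x₀, hx₀X, hx₀⟩ := hF.exists_ne_top w hw
  set L := (F w x₀).toReal
  have hx₀L : cExt X (F w) x₀ ≤ L := by
    rw [cExt, if_pos hx₀X, EReal.coe_toReal hx₀ (ne_bot_of_le_ne_bot (hF.iInf_ne_bot hw)
      (iInf₂_le x₀ hx₀X))]
  have hKX : ∀ x, cExt X (F w) x ≤ L → x ∈ X := fun x hx => by_contra fun hxX =>
    (EReal.coe_lt_top L).not_ge (by rwa [cExt, if_neg hxX] at hx)
  obtain ⟨A, hA⟩ := hF.levelBdd w hw
  have hK : IsCompact {x | cExt X (F w) x ≤ L} := by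
    refine (isCompact_closedBall (0 : Eucl n) (L + A)).of_isClosed_subset
      ((hF.lowerSemicontinuous_cExt hw).isClosed_preimage L) fun x hx => ?_
    rw [mem_ofPred_eq] at hx
    have hxX := hKX x hx
    rw [cExt, if_pos hxX] at hx
    have := (hA.self_of_nhds x hxX).trans hx
    rw [EReal.coe_le_coe_iff] at this
    exact mem_closedBall_zero_iff.2 (by linarith)
  obtain ⟨x, hxL, hmin⟩ := LowerSemicontinuousOn.exists_isMinOn ⟨x₀, hx₀L⟩ hK
    ((hF.lowerSemicontinuous_cExt hw).lowerSemicontinuousOn _)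
  have hxX := hKX x hxL
  refine ⟨x, hxX, fun x' hx'X => ?_⟩
  have key : cExt X (F w) x ≤ cExt X (F w) x' := by
    by_cases hx' : cExt X (F w) x' ≤ L
    · exact isMinOn_iff.1 hmin x' hx'
    · exact (isMinOn_iff.1 hmin x₀ hx₀L).trans (hx₀L.trans (not_le.1 hx').le)
  rwa [cExt, cExt, if_pos hxX, if_pos hx'X] at key

theorem isCompact_argminOn (hF : IsRegularParametric X Y F) (hw : w ∈ Y) :
    IsCompact (argminOn X (F w)) := by
  obtain ⟨R, hR⟩ := hF.eventually_argminOn_subset hw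
  refine (isCompact_closedBall 0 R).of_isClosed_subset ?_ hR.self_of_nhds
  rw [show argminOn X (F w) = cExt X (F w) ⁻¹' Iic (⨅ x ∈ X, F w x) from
    Set.ext fun x => hF.mem_argminOn_iff hw]
  exact (hF.lowerSemicontinuous_cExt hw).isClosed_preimage _

theorem mem_argminOn_of_mem_closure_graph (hF : IsRegularParametric X Y F) (hw : w ∈ Y)
    {x : Eucl n} (hx : (w, x) ∈ closure (svGraph Y fun y => argminOn X (F y))) :
    x ∈ argminOn X (F w) := by
  by_contra hx'
  have hlt := not_le.1 (mt (hF.mem_argminOn_iff hw).2 hx')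
  obtain ⟨t, hinf, ht⟩ := exists_between hlt
  have hinf' : ∀ᶠ q : Eucl n × Eucl n in 𝓝 (w, x), ⨅ x ∈ X, F q.1 x < t :=
    (continuousAt_fst (p := (w, x))).eventually (hF.upperSemicontinuousAt_iInf hw t hinf)
  obtain ⟨q, ⟨hq, hqt⟩, hqY, hqM⟩ := mem_closure_iff_nhds.1 hx _
    (inter_mem (hF.lsc w hw x t ht) hinf')
  exact (((hF.mem_argminOn_iff hqY).1 hqM).trans_lt hqt).not_gt hq

theorem uscAt_argminOn (hF : IsRegularParametric X Y F) (hw : w ∈ Y) :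
    UscAt Y (fun y => argminOn X (F y)) w := by
  intro V hV hwV
  obtain ⟨R, hR⟩ := hF.eventually_argminOn_subset hw
  have hK : ∀ᶠ y in 𝓝 w, ∀ x ∈ Metric.closedBall 0 R \ V,
      (y, x) ∉ svGraph Y fun y => argminOn X (F y) := by
    refine ((isCompact_closedBall _ _).diff hV).eventually_forall_of_forall_eventually
      fun x hx => ?_
    have hxw : (w, x) ∉ closure (svGraph Y fun y => argminOn X (F y)) := fun h =>
      hx.2 (hwV (hF.mem_argminOn_of_mem_closure_graph hw h))
    simpa [mem_closure_iff_frequently] using hxw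
  refine ⟨Y ∩ {y | argminOn X (F y) ⊆ Metric.closedBall 0 R ∧
      ∀ x ∈ Metric.closedBall 0 R \ V, (y, x) ∉ svGraph Y fun y => argminOn X (F y)},
    inter_subset_left, inter_mem self_mem_nhdsWithin
      (mem_nhdsWithin_of_mem_nhds (hR.and hK)), ?_⟩
  simp only [iUnion_subset_iff]
  intro y ⟨hyY, hyR, hyK⟩ x hx
  by_contra hxV
  exact hyK x ⟨hyR hx, hxV⟩ ⟨hyY, hx⟩

theorem locBddAt_argminOn (hF : IsRegularParametric X Y F) (hw : w ∈ Y) :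
    LocBddAt Y (fun y => argminOn X (F y)) w := by
  obtain ⟨R, hR⟩ := hF.eventually_argminOn_subset hw
  refine ⟨Y ∩ {y | argminOn X (F y) ⊆ Metric.closedBall 0 R}, inter_subset_left,
    inter_mem self_mem_nhdsWithin (mem_nhdsWithin_of_mem_nhds hR),
    (Metric.isBounded_closedBall (x := 0) (r := R)).subset ?_⟩
  simp only [iUnion_subset_iff]
  exact fun y hy => hy.2

theorem oscAt_argminOn (hF : IsRegularParametric X Y F) (hw : w ∈ Y) :
    OscAt Y X (fun y => argminOn X (F y)) w := fun _ _ _ _ hu hv hut hvt =>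
  hF.mem_argminOn_of_mem_closure_graph hw <|
    mem_closure_of_tendsto (hut.prodMk_nhds hvt) (Eventually.of_forall fun k => ⟨hu k, hv k⟩)

end IsRegularParametric

section Bregman

variable {φ : Eucl n → EReal} {φ' : Eucl n → Eucl n} {f : Eucl n → EReal}

def tangent (φ : Eucl n → EReal) (φ' : Eucl n → Eucl n) (y x : Eucl n) : ℝ :=
  (φ y).toReal + ⟪φ' y, x - y⟫

namespace IsDGF

theorem coe_toReal (hφ : IsDGF φ φ') {x : Eucl n} (hx : x ∈ edom φ) :
    ((φ x).toReal : EReal) = φ x :=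
  EReal.coe_toReal hx (hφ.ne_bot x)

theorem convex_edom (hφ : IsDGF φ φ') : Convex ℝ (edom φ) := by
  intro x hx y hy a b ha hb hab
  refine ne_top_of_le_ne_top ?_ (hφ.convex x trivial y trivial a b ha hb hab)
  rw [← hφ.coe_toReal hx, ← hφ.coe_toReal hy, ← EReal.coe_mul, ← EReal.coe_mul,
    ← EReal.coe_add]
  exact EReal.coe_ne_top _

theorem convexOn_toReal (hφ : IsDGF φ φ') : ConvexOn ℝ (edom φ) fun x => (φ x).toReal := by
  refine ⟨hφ.convex_edom, fun x hx y hy a b ha hb hab => ?_⟩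
  have h := hφ.convex x trivial y trivial a b ha hb hab
  rw [← hφ.coe_toReal hx, ← hφ.coe_toReal hy,
    ← hφ.coe_toReal (hφ.convex_edom hx hy ha hb hab), ← EReal.coe_mul, ← EReal.coe_mul,
    ← EReal.coe_add, EReal.coe_le_coe_iff] at h
  simpa [smul_eq_mul] using h

theorem tangent_le (hφ : IsDGF φ φ') {y : Eucl n} (hy : y ∈ interior (edom φ)) (x : Eucl n) :
    (tangent φ φ' y x : EReal) ≤ φ x := by
  by_cases hx : x ∈ edom φ
  swap
  · rw [show φ x = ⊤ by simpa [edom] using hx]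
    exact le_top
  rw [← hφ.coe_toReal hx, EReal.coe_le_coe_iff, tangent, ← le_sub_iff_add_le']
  have hslope : ∀ t ∈ Ioc (0 : ℝ) 1,
      ((φ (y + t • (x - y))).toReal - (φ y).toReal) / t ≤ (φ x).toReal - (φ y).toReal := by
    intro t ht
    have hconv := hφ.convexOn_toReal.2 (interior_subset hy) hx (sub_nonneg.2 ht.2) ht.1.le
      (sub_add_cancel 1 t)
    rw [show (1 - t) • y + t • x = y + t • (x - y) by module, smul_eq_mul, smul_eq_mul] at hconv
    rw [div_le_iff₀ ht.1]
    linarith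
  exact le_of_tendsto ((hφ.diff y hy).tendsto_slope (x - y))
    (eventually_iff_exists_mem.2 ⟨Ioc 0 1, Ioc_mem_nhdsGT zero_lt_one, hslope⟩)

theorem continuousAt_toReal (hφ : IsDGF φ φ') {y : Eucl n} (hy : y ∈ interior (edom φ)) :
    ContinuousAt (fun z => (φ z).toReal) y :=
  (hφ.diff y hy).continuousAt

theorem eventually_norm_grad_le (hφ : IsDGF φ φ') {w : Eucl n} (hw : w ∈ interior (edom φ)) :
    ∃ C, ∀ᶠ y in 𝓝 w, ‖φ' y‖ ≤ C := by
  obtain ⟨ε, hε, hball⟩ := Metric.isOpen_iff.1 isOpen_interior w hw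
  have hK : Metric.closedBall w (ε / 2) ⊆ interior (edom φ) :=
    (Metric.closedBall_subset_ball (half_lt_self hε)).trans hball
  obtain ⟨M, hM⟩ := (isCompact_closedBall w (ε / 2)).exists_bound_of_continuousOn
    fun z hz => (hφ.continuousAt_toReal (hK hz)).continuousWithinAt
  refine ⟨2 * M / (ε / 4), eventually_of_mem
    (Metric.ball_mem_nhds w (show 0 < ε / 4 by positivity)) fun y hy => ?_⟩
  rw [le_div_iff₀ (by positivity), mul_comm]
  refine mul_norm_le_of_forall_inner_le (by positivity) fun v hv => ?_
  have hyK : y ∈ Metric.closedBall w (ε / 2) :=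
    Metric.ball_subset_closedBall (Metric.ball_subset_ball (by linarith) hy)
  have hyvK : y + v ∈ Metric.closedBall w (ε / 2) := by
    rw [Metric.mem_closedBall, dist_eq_norm, add_sub_right_comm]
    refine (norm_add_le _ _).trans ?_
    have := Metric.mem_ball.1 hy
    rw [dist_eq_norm] at this
    linarith
  have htan := hφ.tangent_le (hK hyK) (y + v)
  rw [← hφ.coe_toReal (interior_subset (hK hyvK)), EReal.coe_le_coe_iff, tangent,
    add_sub_cancel_left] at htan
  have h1 := abs_le.1 (Real.norm_eq_abs _ ▸ hM _ hyK)
  have h2 := abs_le.1 (Real.norm_eq_abs _ ▸ hM _ hyvK)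
  linarith

theorem eq_grad_of_subgradient (hφ : IsDGF φ φ') {w g : Eucl n} (hw : w ∈ interior (edom φ))
    (hg : ∀ x ∈ interior (edom φ), (φ w).toReal + ⟪g, x - w⟫ ≤ (φ x).toReal) : g = φ' w :=
  (hφ.diff w hw).eq_of_le (eventually_of_mem (isOpen_interior.mem_nhds hw) hg)

theorem continuousAt_grad (hφ : IsDGF φ φ') {w : Eucl n} (hw : w ∈ interior (edom φ)) :
    ContinuousAt φ' w := by
  obtain ⟨C, hC⟩ := hφ.eventually_norm_grad_le hw
  refine (isCompact_closedBall (0 : Eucl n) C).tendsto_nhds_of_unique_mapClusterPt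
    (hC.mono fun y hy => mem_closedBall_zero_iff.2 hy) fun g _ hg => ?_
  refine hφ.eq_grad_of_subgradient hw fun x hx => ?_
  by_contra! hlt
  have hcont : ContinuousAt (fun p : Eucl n × Eucl n => (φ p.1).toReal + ⟪p.2, x - p.1⟫)
      (w, g) :=
    .add (ContinuousAt.comp (g := fun z => (φ z).toReal) (hφ.continuousAt_toReal hw)
        continuousAt_fst)
      (continuousAt_snd.inner (continuousAt_const.sub continuousAt_fst))
  have hev : ∀ᶠ p in 𝓝 w ×ˢ 𝓝 g, (φ x).toReal < (φ p.1).toReal + ⟪p.2, x - p.1⟫ := by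
    rw [← nhds_prod_eq]
    exact hcont.eventually (lt_mem_nhds hlt)
  obtain ⟨U, hU, V, hV, hUV⟩ := eventually_prod_iff.1 hev
  obtain ⟨y, hyV, hyU, hyY⟩ :=
    ((hg.frequently hV).and_eventually (hU.and (isOpen_interior.mem_nhds hw))).exists
  have htan := hφ.tangent_le hyY x
  rw [← hφ.coe_toReal (interior_subset hx), EReal.coe_le_coe_iff] at htan
  exact (hUV hyU hyV).not_ge htan

theorem continuousAt_tangent (hφ : IsDGF φ φ') {w : Eucl n} (hw : w ∈ interior (edom φ))
    (x : Eucl n) : ContinuousAt (fun q : Eucl n × Eucl n => tangent φ φ' q.1 q.2) (w, x) :=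
  .add (ContinuousAt.comp (g := fun z => (φ z).toReal) (hφ.continuousAt_toReal hw)
      continuousAt_fst)
    (ContinuousAt.comp (g := φ') (hφ.continuousAt_grad hw) continuousAt_fst |>.inner
      (continuousAt_snd.sub continuousAt_fst))

theorem exists_abs_tangent_le (hφ : IsDGF φ φ') {w : Eucl n} (hw : w ∈ interior (edom φ)) :
    ∃ K, ∀ᶠ y in 𝓝 w, ∀ x, |tangent φ φ' y x| ≤ K * (1 + ‖x‖) := by
  set a := |(φ w).toReal| + 1
  set b := ‖φ' w‖ + 1
  set c := ‖w‖ + 1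
  have ha : ∀ᶠ y in 𝓝 w, |(φ y).toReal| < a :=
    (hφ.continuousAt_toReal hw).abs.eventually (gt_mem_nhds (lt_add_one _))
  have hb : ∀ᶠ y in 𝓝 w, ‖φ' y‖ < b :=
    (hφ.continuousAt_grad hw).norm.eventually (gt_mem_nhds (lt_add_one _))
  have hc : ∀ᶠ y in 𝓝 w, ‖y‖ < c :=
    continuousAt_id.norm.eventually (gt_mem_nhds (lt_add_one _))
  refine ⟨a + b * (1 + c), ?_⟩
  filter_upwards [ha, hb, hc] with y hay hby hcy x
  have hinner : |⟪φ' y, x - y⟫| ≤ b * (‖x‖ + c) :=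
    (abs_real_inner_le_norm _ _).trans (mul_le_mul hby.le ((norm_sub_le x y).trans (by linarith))
      (norm_nonneg _) (by positivity))
  have : 0 ≤ b + a * ‖x‖ + b * c * ‖x‖ := by positivity
  calc |tangent φ φ' y x| ≤ |(φ y).toReal| + |⟪φ' y, x - y⟫| := abs_add_le _ _
    _ ≤ a + b * (‖x‖ + c) := add_le_add hay.le hinner
    _ ≤ (a + b * (1 + c)) * (1 + ‖x‖) := by linarith

theorem exists_mul_norm_sub_le (hφ : IsDGF φ φ') (hco : OneCoercive φ) (K : ℝ) :
    ∃ A, ∀ x ∈ edom φ, K * ‖x‖ - A ≤ (φ x).toReal := by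
  obtain ⟨w, hw⟩ := hφ.int_nonempty
  obtain ⟨K₀, hK₀⟩ := hφ.exists_abs_tangent_le hw
  obtain ⟨R, hR⟩ := hco K
  set R' := max R 0
  refine ⟨|K| * R' + |K₀| * (1 + R'), fun x hx => ?_⟩
  have hA : 0 ≤ |K| * R' + |K₀| * (1 + R') := by positivity
  rcases le_or_gt R' ‖x‖ with hxR | hxR
  · have := hR x ((le_max_left R 0).trans hxR)
    rw [← hφ.coe_toReal hx, EReal.coe_le_coe_iff] at this
    linarith
  · have htan := hφ.tangent_le hw x
    rw [← hφ.coe_toReal hx, EReal.coe_le_coe_iff] at htan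
    have h1 := neg_le_of_abs_le (hK₀.self_of_nhds x)
    have h2 : K * ‖x‖ ≤ |K| * R' :=
      (mul_le_mul_of_nonneg_right (le_abs_self K) (norm_nonneg x)).trans
        (mul_le_mul_of_nonneg_left hxR.le (abs_nonneg K))
    have h3 : K₀ * (1 + ‖x‖) ≤ |K₀| * (1 + R') :=
      mul_le_mul (le_abs_self K₀) (by linarith) (by positivity) (abs_nonneg K₀)
    linarith

end IsDGF

/-- `benv φ φ' lam f y` and `bprox φ φ' lam f y` are, by definition, the infimum and the set of
minimizers of `bregObjective φ φ' lam f y` over `edom φ`. -/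
def bregObjective (φ : Eucl n → EReal) (φ' : Eucl n → Eucl n) (lam : ℝ) (f : Eucl n → EReal)
    (y x : Eucl n) : EReal :=
  f x + ((lam⁻¹ : ℝ) : EReal) * breg φ φ' x y

theorem IsDGF.breg_eq (hφ : IsDGF φ φ') {x y : Eucl n} (hx : x ∈ edom φ)
    (hy : y ∈ interior (edom φ)) : breg φ φ' x y = ((φ x).toReal - tangent φ φ' y x : ℝ) := by
  rw [breg, if_pos hy, tangent, sub_add_eq_sub_sub, EReal.coe_sub, EReal.coe_sub,
    hφ.coe_toReal hx, hφ.coe_toReal (interior_subset hy)]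

theorem IsDGF.bregObjective_eq (hφ : IsDGF φ φ') {lam : ℝ} {x y : Eucl n} (hx : x ∈ edom φ)
    (hy : y ∈ interior (edom φ)) :
    bregObjective φ φ' lam f y x =
      f x + ((lam⁻¹ * ((φ x).toReal - tangent φ φ' y x) : ℝ) : EReal) := by
  rw [bregObjective, hφ.breg_eq hx hy, ← EReal.coe_mul]

theorem IsDGF.continuousAt_bregObjective (hφ : IsDGF φ φ') (lam : ℝ) {x w : Eucl n}
    (hx : x ∈ edom φ) (hw : w ∈ interior (edom φ)) :
    ContinuousAt (fun y => bregObjective φ φ' lam f y x) w := by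
  have htan : ContinuousAt (fun y => tangent φ φ' y x) w :=
    ContinuousAt.comp (g := fun q : Eucl n × Eucl n => tangent φ φ' q.1 q.2)
      (f := fun y => (y, x)) (hφ.continuousAt_tangent hw x)
      (continuousAt_id.prodMk continuousAt_const)
  refine ContinuousAt.congr ?_ (eventually_of_mem (isOpen_interior.mem_nhds hw)
    fun y hy => (hφ.bregObjective_eq hx hy).symm)
  exact (EReal.continuousAt_add (Or.inr (EReal.coe_ne_bot _)) (Or.inr (EReal.coe_ne_top _))).comp
    (continuousAt_const.prodMk (continuous_coe_real_ereal.continuousAt.comp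
      (continuousAt_const.mul (continuousAt_const.sub htan))))

theorem IsDGF.coe_mul_eq (hφ : IsDGF φ φ') {c : ℝ} (hc : 0 < c) (x : Eucl n) :
    (c : EReal) * φ x = if x ∈ edom φ then ((c * (φ x).toReal : ℝ) : EReal) else ⊤ := by
  split_ifs with hx
  · rw [EReal.coe_mul, hφ.coe_toReal hx]
  · rw [show φ x = ⊤ by simpa [edom] using hx, EReal.coe_mul_top_of_pos hc]

section ProxBounded

variable {lam μ β : ℝ} {y₀ : Eucl n}

theorem IsDGF.coe_add_tangent_le (hφ : IsDGF φ φ') (hy₀ : y₀ ∈ interior (edom φ))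
    (hβ : ∀ x ∈ edom φ, (β : EReal) ≤ bregObjective φ φ' μ f y₀ x) {x : Eucl n}
    (hx : x ∈ edom φ) :
    ((β + μ⁻¹ * tangent φ φ' y₀ x : ℝ) : EReal) ≤ f x + ((μ⁻¹ * (φ x).toReal : ℝ) : EReal) := by
  have h := add_le_add_left (hφ.bregObjective_eq hx hy₀ ▸ hβ x hx)
    ((μ⁻¹ * tangent φ φ' y₀ x : ℝ) : EReal)
  rwa [add_assoc, ← EReal.coe_add, ← EReal.coe_add, mul_sub, sub_add_cancel] at h

theorem IsDGF.eventually_coe_norm_sub_le_bregObjective (hφ : IsDGF φ φ') (hco : OneCoercive φ)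
    (hlam : 0 < lam) (hμ : lam < μ) (hy₀ : y₀ ∈ interior (edom φ))
    (hβ : ∀ x ∈ edom φ, (β : EReal) ≤ bregObjective φ φ' μ f y₀ x) {w : Eucl n}
    (hw : w ∈ interior (edom φ)) :
    ∃ A : ℝ, ∀ᶠ y in 𝓝 w, ∀ x ∈ edom φ,
      ((‖x‖ - A : ℝ) : EReal) ≤ bregObjective φ φ' lam f y x := by
  have hc : 0 < lam⁻¹ - μ⁻¹ := sub_pos.2 (inv_strictAnti₀ hlam hμ)
  obtain ⟨K, hK⟩ := hφ.exists_abs_tangent_le hw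
  obtain ⟨K₀, hK₀⟩ := hφ.exists_abs_tangent_le hy₀
  obtain ⟨A', hA'⟩ :=
    hφ.exists_mul_norm_sub_le hco ((lam⁻¹ * K + μ⁻¹ * K₀ + 1) / (lam⁻¹ - μ⁻¹))
  refine ⟨(lam⁻¹ - μ⁻¹) * A' + lam⁻¹ * K + μ⁻¹ * K₀ - β, ?_⟩
  filter_upwards [hK, isOpen_interior.mem_nhds hw] with y hy hyY x hx
  rw [hφ.bregObjective_eq hx hyY]
  by_cases hfx : f x = ⊤
  · rw [hfx, EReal.top_add_coe]
    exact le_top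
  have hf := hφ.coe_add_tangent_le hy₀ hβ hx
  have hfb : f x ≠ ⊥ := fun h => by
    rw [h, EReal.bot_add] at hf
    exact EReal.coe_ne_bot _ (le_bot_iff.1 hf)
  rw [← EReal.coe_toReal hfx hfb, ← EReal.coe_add, EReal.coe_le_coe_iff] at hf ⊢
  have hφx := mul_le_mul_of_nonneg_left (hA' x hx) hc.le
  have hcK : (lam⁻¹ - μ⁻¹) * ((lam⁻¹ * K + μ⁻¹ * K₀ + 1) / (lam⁻¹ - μ⁻¹) * ‖x‖)
      = (lam⁻¹ * K + μ⁻¹ * K₀ + 1) * ‖x‖ := by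
    rw [← mul_assoc, mul_div_cancel₀ _ hc.ne']
  have hT := mul_le_mul_of_nonneg_left (le_of_abs_le (hy x)) (inv_nonneg.2 hlam.le)
  have hT₀ := mul_le_mul_of_nonneg_left (neg_le_of_abs_le (hK₀.self_of_nhds x))
    (inv_nonneg.2 (hlam.trans hμ).le)
  linarith

/-- Near a point outside `edom φ`, `f + μ⁻¹ φ` stays bounded below while `(lam⁻¹ - μ⁻¹) φ → ∞`. -/
theorem IsDGF.lowerSemicontinuous_cExt_add (hφ : IsDGF φ φ')
    (hlsc : LowerSemicontinuousOn f (edom φ)) (hlam : 0 < lam) (hμ : lam < μ)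
    (hy₀ : y₀ ∈ interior (edom φ))
    (hβ : ∀ x ∈ edom φ, (β : EReal) ≤ bregObjective φ φ' μ f y₀ x) :
    LowerSemicontinuous (cExt (edom φ) fun x => f x + ((lam⁻¹ : ℝ) : EReal) * φ x) := by
  have hμ₀ : 0 < μ⁻¹ := inv_pos.2 (hlam.trans hμ)
  have hc : 0 < lam⁻¹ - μ⁻¹ := sub_pos.2 (inv_strictAnti₀ hlam hμ)
  have hu : LowerSemicontinuousOn (fun x => f x + ((μ⁻¹ : ℝ) : EReal) * φ x) (edom φ) :=
    fun x hx => (hlsc.lowerSemicontinuousWithinAt hx).add'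
      ((hφ.lsc.coe_mul hμ₀).lowerSemicontinuousWithinAt _ x) <| by
      rw [hφ.coe_mul_eq hμ₀, if_pos hx]
      exact EReal.continuousAt_add (Or.inr (EReal.coe_ne_bot _)) (Or.inr (EReal.coe_ne_top _))
  have hu_bdd : ∀ x, ∃ β' : ℝ, ∀ᶠ z in 𝓝 x, z ∈ edom φ →
      (β' : EReal) ≤ f z + ((μ⁻¹ : ℝ) : EReal) * φ z := by
    intro x
    have htan : ContinuousAt (fun z => tangent φ φ' y₀ z) x :=
      ContinuousAt.comp (g := fun q : Eucl n × Eucl n => tangent φ φ' q.1 q.2)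
        (f := fun z => (y₀, z)) (hφ.continuousAt_tangent hy₀ x)
        (continuousAt_const.prodMk continuousAt_id)
    refine ⟨β + μ⁻¹ * (tangent φ φ' y₀ x - 1), ?_⟩
    filter_upwards [htan.eventually (lt_mem_nhds (sub_one_lt _))] with z hz hzX
    rw [hφ.coe_mul_eq hμ₀, if_pos hzX]
    refine le_trans ?_ (hφ.coe_add_tangent_le hy₀ hβ hzX)
    exact EReal.coe_le_coe_iff.2 (by gcongr)
  convert lowerSemicontinuous_ite_add hu hu_bdd (hφ.lsc.coe_mul hc)
    (fun x => by rw [hφ.coe_mul_eq hc]; split_ifs; exacts [EReal.coe_ne_bot _, top_ne_bot])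
    (fun x hx => by rw [hφ.coe_mul_eq hc, if_neg hx]) using 2 with x
  unfold cExt
  split_ifs with hx
  · dsimp only
    rw [hφ.coe_mul_eq hc, hφ.coe_mul_eq hμ₀, hφ.coe_mul_eq (inv_pos.2 hlam), if_pos hx,
      if_pos hx, if_pos hx, add_assoc, ← EReal.coe_add]
    congr 2
    ring
  · rfl

theorem IsDGF.lowerSemicontinuousAt_cExt_bregObjective (hφ : IsDGF φ φ')
    (hlsc : LowerSemicontinuousOn f (edom φ)) (hlam : 0 < lam) (hμ : lam < μ)
    (hy₀ : y₀ ∈ interior (edom φ))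
    (hβ : ∀ x ∈ edom φ, (β : EReal) ≤ bregObjective φ φ' μ f y₀ x) {w : Eucl n}
    (hw : w ∈ interior (edom φ)) (x : Eucl n) :
    LowerSemicontinuousAt
      (fun q : Eucl n × Eucl n => cExt (edom φ) (bregObjective φ φ' lam f q.1) q.2) (w, x) := by
  have hG := LowerSemicontinuousAt.comp (g := Prod.snd) (x := (w, x))
    (hφ.lowerSemicontinuous_cExt_add hlsc hlam hμ hy₀ hβ x) continuousAt_snd
  have htan : ContinuousAt (fun q : Eucl n × Eucl n => -(lam⁻¹ * tangent φ φ' q.1 q.2)) (w, x) :=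
    ((hφ.continuousAt_tangent hw x).const_mul _).neg
  refine (hG.add' (continuous_coe_real_ereal.continuousAt.comp htan).lowerSemicontinuousAt
    (EReal.continuousAt_add (Or.inr (EReal.coe_ne_bot _)) (Or.inr (EReal.coe_ne_top _)))
    ).congr_of_eventuallyEq ?_
  filter_upwards [continuousAt_fst.preimage_mem_nhds (isOpen_interior.mem_nhds hw)] with q hq
  simp only [Function.comp_apply, cExt]
  split_ifs with hx
  · rw [hφ.bregObjective_eq hx hq, ← hφ.coe_toReal hx, ← EReal.coe_mul, add_assoc,
      ← EReal.coe_add]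
    congr 2
    rw [EReal.toReal_coe]
    ring
  · exact EReal.top_add_coe _

theorem IsDGF.isRegularParametric_bregObjective (hφ : IsDGF φ φ') (hco : OneCoercive φ)
    (hproper : ProperOn (edom φ) f) (hlsc : LowerSemicontinuousOn f (edom φ)) (hlam : 0 < lam)
    (hμ : lam < μ) (hy₀ : y₀ ∈ interior (edom φ))
    (hβ : ∀ x ∈ edom φ, (β : EReal) ≤ bregObjective φ φ' μ f y₀ x) :
    IsRegularParametric (edom φ) (interior (edom φ)) (bregObjective φ φ' lam f) where
  lsc _ hw := hφ.lowerSemicontinuousAt_cExt_bregObjective hlsc hlam hμ hy₀ hβ hw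
  levelBdd _ hw := hφ.eventually_coe_norm_sub_le_bregObjective hco hlam hμ hy₀ hβ hw
  usc _ hw _ hx := (hφ.continuousAt_bregObjective lam hx hw).upperSemicontinuousAt
  exists_ne_top w hw := by
    obtain ⟨x, hx, hfx⟩ := hproper.1
    refine ⟨x, hx, ?_⟩
    rw [hφ.bregObjective_eq hx hw]
    exact EReal.add_ne_top hfx (EReal.coe_ne_top _)

end ProxBounded

theorem exists_lt_proxBddBelow {lam : ℝ} (hthr : ENNReal.ofReal lam < pbThreshold φ φ' f) :
    ∃ μ, lam < μ ∧ ProxBddBelow φ φ' μ f := by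
  obtain ⟨μ, hμ⟩ := lt_iSup_iff.1 hthr
  obtain ⟨hμS, hlt⟩ := lt_iSup_iff.1 hμ
  exact ⟨μ, (ENNReal.ofReal_lt_ofReal_iff hμS.1).1 hlt, hμS.2⟩

end Bregman

/-- Suppose `φ` is 1-coercive and `f : X → ℝ̄` is proper, lsc on `X`, and
`φ`-prox-bounded with threshold `λ_f`.  For every `λ ∈ (0, λ_f)`:
(i) `dom env_λ f = dom prox_{λf} = Y`, i.e. `env_λ f` is real-valued on `Y` and
`prox_{λf}(y) ≠ ∅` for every `y ∈ Y`;
(ii) `env_λ f : Y → ℝ` is continuous;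
(iii) `prox_{λf} : Y ⇉ X` is compact-valued and usc; in particular it is locally bounded
and osc, and its graph is closed in `Y × ℝⁿ`. -/
theorem mainprop_left {n : ℕ} (φ : Eucl n → EReal) (φ' : Eucl n → Eucl n)
    (hφ : IsDGF φ φ') (hco : OneCoercive φ)
    (f : Eucl n → EReal) (hproper : ProperOn (edom φ) f)
    (hlsc : LowerSemicontinuousOn f (edom φ))
    (lam : ℝ) (hlam : 0 < lam) (hthr : ENNReal.ofReal lam < pbThreshold φ φ' f) :
    (∀ y ∈ interior (edom φ),
      benv φ φ' lam f y ≠ ⊤ ∧ benv φ φ' lam f y ≠ ⊥ ∧ (bprox φ φ' lam f y).Nonempty) ∧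
    ContinuousOn (benv φ φ' lam f) (interior (edom φ)) ∧
    (∀ y ∈ interior (edom φ),
      IsCompact (bprox φ φ' lam f y) ∧
      UscAt (interior (edom φ)) (bprox φ φ' lam f) y ∧
      LocBddAt (interior (edom φ)) (bprox φ φ' lam f) y ∧
      OscAt (interior (edom φ)) (edom φ) (bprox φ φ' lam f) y) ∧
    (∀ p ∈ closure (svGraph (interior (edom φ)) (bprox φ φ' lam f)),
      p.1 ∈ interior (edom φ) → p ∈ svGraph (interior (edom φ)) (bprox φ φ' lam f)) := by
  obtain ⟨μ, hμ, y₀, hy₀, hbot⟩ := exists_lt_proxBddBelow hthr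
  obtain ⟨β, hβ⟩ := EReal.exists_coe_le_of_iInf_ne_bot hbot
  have hF := hφ.isRegularParametric_bregObjective hco hproper hlsc hlam hμ hy₀ hβ
  exact ⟨fun y hy => ⟨hF.iInf_ne_top hy, hF.iInf_ne_bot hy, hF.argminOn_nonempty hy⟩,
    fun y hy => (hF.continuousAt_iInf hy).continuousWithinAt,
    fun y hy => ⟨hF.isCompact_argminOn hy, hF.uscAt_argminOn hy, hF.locBddAt_argminOn hy,
      hF.oscAt_argminOn hy⟩,
    fun p hp hp1 => ⟨hp1, hF.mem_argminOn_of_mem_closure_graph hp1 hp⟩⟩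

end BregmanPaper
end
end

section
/- Suppose dom φ = ℝⁿ (so X = Y = ℝⁿ), and let g : ℝⁿ → ℝ ∪ {±∞} be proper and right φ-prox-bounded with threshold λ̄_g. Then for every λ ∈ (0, λ̄_g): (i) env*_λ g : ℝⁿ → ℝ is real-valued and locally Lipschitz continuous; (ii) if φ is Legendre, then the restriction (∇φ ▷ g)|_{dom φ*} is (left) φ*-prox-bounded with threshold equal to λ̄_g; (iii) λ(∇φ ▷ g) + φ* is 1-coercive, and it is lsc on all of ℝⁿ provided (∇φ ▷ g)|_{dom φ*} is lsc; for the latter it suffices that g be lsc and that either φ be Legendre with dom φ* open, or g be coercive, or φ be 1-coercive. -/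
open Filter Topology Bornology Set RealInnerProductSpace Classical

noncomputable section

/-!
Since `dom φ = ℝⁿ`, `φ` is a finite differentiable convex function, and Fenchel–Young gives
`φ*(∇φ y) = ⟪y, ∇φ y⟫ - φ y`, hence `D(a, y) = φ a + φ*(∇φ y) - ⟪a, ∇φ y⟫`. So `env*_λ g (x)`
and, through `∇φ ▷ g`, the left `φ*`-envelope at `η` are, up to constants, infima of the tilted
function `g y + λ⁻¹ (φ*(∇φ y) - ⟪a, ∇φ y⟫)` with `a = x`, resp. `a = ∇φ*(η)`. A lower bound of
the tilted function for one `λ` and one slope `a` passes to every smaller `λ'` and every slope,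
because `φ* ≥ ⟪z, ·⟫ - φ z` lets the excess `(λ'⁻¹ - λ⁻¹) φ*` absorb any linear term. This gives
the finiteness in (i) and both inequalities between the thresholds in (ii); moreover
`env*_λ g - λ⁻¹ φ` is an infimum of affine functions, hence concave and locally Lipschitz.

For (iii) the same bound gives `λ (∇φ ▷ g) + φ* ≥ affine + (1 - λ/λ') φ*` with `λ < λ'`, and `φ*`
is 1-coercive and lsc. Finally `∇φ ▷ g` is lsc at `ξ₀` as soon as the points `y` with `∇φ y` near
`ξ₀` and `g y` bounded above stay bounded, which each of the three conditions guarantees: a limit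
point of such `y` lies in the fiber over `ξ₀`, since `∇φ` has closed graph.
-/

lemma EReal.coe_sub_le_iff_le_add_coe {r s : ℝ} {a : EReal} :
    ((r - s : ℝ) : EReal) ≤ a ↔ (r : EReal) ≤ a + s := by
  rw [EReal.coe_sub,
    EReal.sub_le_iff_le_add (.inl (EReal.coe_ne_bot s)) (.inl (EReal.coe_ne_top s))]

lemma biSup_ofReal_le_of_forall_lt {P Q : ℝ → Prop}
    (h : ∀ l₁ l₂, 0 < l₂ → l₂ < l₁ → P l₁ → Q l₂) :
    ⨆ l ∈ {l : ℝ | 0 < l ∧ P l}, ENNReal.ofReal l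
      ≤ ⨆ l ∈ {l : ℝ | 0 < l ∧ Q l}, ENNReal.ofReal l := by
  refine iSup₂_le fun l hl => le_of_forall_lt fun c hc => ?_
  obtain ⟨r, -, hcr, hrl⟩ := ENNReal.lt_iff_exists_real_btwn.mp hc
  have hr : 0 < r := ENNReal.ofReal_pos.mp (pos_of_gt hcr)
  exact hcr.trans_le (le_iSup₂_of_le (f := fun l (_ : l ∈ {l : ℝ | 0 < l ∧ Q l}) =>
    ENNReal.ofReal l) r ⟨hr, h l r hr (ENNReal.ofReal_lt_ofReal_iff'.mp hrl).1 hl.2⟩ le_rfl)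

lemma exists_lt_of_ofReal_lt_biSup {P : ℝ → Prop} {a : ℝ}
    (h : ENNReal.ofReal a < ⨆ l ∈ {l : ℝ | 0 < l ∧ P l}, ENNReal.ofReal l) :
    ∃ l, a < l ∧ P l := by
  obtain ⟨l, hl, hal⟩ := lt_biSup_iff.mp h
  exact ⟨l, (ENNReal.ofReal_lt_ofReal_iff'.mp hal).1, hl.2⟩

section Semicontinuity

variable {α β : Type*} [TopologicalSpace α] [Preorder β] {f h : α → β} {s : Set α} {x : α}

lemma LowerSemicontinuousAt.of_minorant (hf : LowerSemicontinuousAt f x) (hfh : ∀ z, f z ≤ h z)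
    (hx : h x ≤ f x) : LowerSemicontinuousAt h x := fun y hy =>
  (hf y (hy.trans_le hx)).mono fun z hz => hz.trans_le (hfh z)

lemma LowerSemicontinuousWithinAt.lowerSemicontinuousAt_of_eq_top [OrderTop β]
    (hf : LowerSemicontinuousWithinAt f s x) (htop : ∀ z ∉ s, f z = ⊤) :
    LowerSemicontinuousAt f x := fun y hy => by
  filter_upwards [eventually_nhdsWithin_iff.mp (hf y hy)] with z hz
  by_cases hzs : z ∈ s
  · exact hz hzs
  · rw [htop z hzs]
    exact hy.trans_le le_top

lemma LowerSemicontinuousWithinAt.coe_mul {f : α → EReal}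
    (hf : LowerSemicontinuousWithinAt f s x) {c : ℝ} (hc : 0 < c) :
    LowerSemicontinuousWithinAt (fun z => (c : EReal) * f z) s x := by
  have hc0 : (c : EReal) ≠ 0 := by exact_mod_cast hc.ne'
  have hcont : ContinuousAt (fun t : EReal => (c : EReal) * t) (f x) :=
    (EReal.continuousAt_mul (p := ((c : EReal), f x)) (.inl hc0) (.inl hc0)
      (.inl (EReal.coe_ne_bot c)) (.inl (EReal.coe_ne_top c))).comp
      (continuous_const.prodMk continuous_id).continuousAt
  exact hcont.comp_lowerSemicontinuousWithinAt hf fun a b hab =>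
    mul_le_mul_of_nonneg_left hab (by exact_mod_cast hc.le)

end Semicontinuity

section Gradient

variable {E : Type*} [NormedAddCommGroup E] [InnerProductSpace ℝ E] [CompleteSpace E]
  {p : E → ℝ} {G : E → E} {u v y : E}

lemma HasGradientAt.hasDerivAt_add_smul (h : HasGradientAt p u y) (d : E) :
    HasDerivAt (fun t : ℝ => p (y + t • d)) ⟪u, d⟫ 0 := by
  have hline : HasDerivAt (fun t : ℝ => y + t • d) d 0 := by
    simpa using ((hasDerivAt_id (0 : ℝ)).smul_const d).const_add y
  have hp : HasFDerivAt p (InnerProductSpace.toDual ℝ E u) (y + (0 : ℝ) • d) := by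
    simpa using h.hasFDerivAt
  simpa [Function.comp_def] using hp.comp_hasDerivAt 0 hline

lemma ConvexOn.add_inner_le_of_hasGradientAt (hp : ConvexOn ℝ univ p)
    (h : HasGradientAt p u y) (z : E) : p y + ⟪u, z - y⟫ ≤ p z := by
  have hline : ConvexOn ℝ univ (fun t : ℝ => p (y + t • (z - y))) := by
    simpa [Function.comp_def, AffineMap.lineMap_apply, add_comm] using
      hp.comp_affineMap (AffineMap.lineMap y z)
  have := hline.le_slope_of_hasDerivAt (mem_univ 0) (mem_univ 1) one_pos
    (h.hasDerivAt_add_smul (z - y))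
  simp only [slope_def_field, one_smul, add_sub_cancel, zero_smul, add_zero, sub_zero,
    div_one] at this
  linarith

lemma HasGradientAt.eq_of_add_inner_le (h : HasGradientAt p v y)
    (hsub : ∀ z, p y + ⟪u, z - y⟫ ≤ p z) : u = v := by
  have hmin : IsLocalMin (fun z => p z - ⟪u, z⟫) y := Filter.Eventually.of_forall fun z => by
    have := hsub z
    rw [inner_sub_right] at this
    show p y - ⟪u, y⟫ ≤ p z - ⟪u, z⟫
    linarith
  have hzero := hmin.hasFDerivAt_eq_zero (h.hasFDerivAt.sub (innerSL ℝ u).hasFDerivAt)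
  apply (InnerProductSpace.toDual ℝ E).injective
  ext z
  simpa [sub_eq_zero, eq_comm] using DFunLike.congr_fun hzero z

lemma ConvexOn.gradient_eq_of_tendsto (hp : ConvexOn ℝ univ p)
    (hG : ∀ x, HasGradientAt p (G x) x) {Y : ℕ → E} {ξ : E} (hY : Tendsto Y atTop (𝓝 y))
    (hGY : Tendsto (fun k => G (Y k)) atTop (𝓝 ξ)) : G y = ξ := by
  refine ((hG y).eq_of_add_inner_le fun z => ?_).symm
  have hlim : Tendsto (fun k => p (Y k) + ⟪G (Y k), z - Y k⟫) atTop
      (𝓝 (p y + ⟪ξ, z - y⟫)) :=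
    ((hG y).continuousAt.tendsto.comp hY).add (hGY.inner (tendsto_const_nhds.sub hY))
  exact le_of_tendsto' hlim fun k => hp.add_inner_le_of_hasGradientAt (hG (Y k)) z

end Gradient

namespace BregmanPaper

variable {n : ℕ}

lemma OneCoercive.mono {f h : Eucl n → EReal} (hf : OneCoercive f) (hfh : ∀ ξ, f ξ ≤ h ξ) :
    OneCoercive h :=
  fun M => (hf M).imp fun _ hR ξ hξ => (hR ξ hξ).trans (hfh ξ)

lemma OneCoercive.coe_add_coe_mul {f : Eucl n → EReal} (hf : OneCoercive f) {c : ℝ}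
    (hc : 0 < c) {u : Eucl n → ℝ} {a b : ℝ} (hu : ∀ ξ, -(a + b * ‖ξ‖) ≤ u ξ) :
    OneCoercive fun ξ => (u ξ : EReal) + c * f ξ := by
  intro M
  obtain ⟨R, hR⟩ := hf ((M + b + 1) / c)
  refine ⟨max R a, fun ξ hξ => ?_⟩
  have hf' : (((c * ((M + b + 1) / c * ‖ξ‖)) : ℝ) : EReal) ≤ c * f ξ := by
    rw [EReal.coe_mul]
    exact mul_le_mul_of_nonneg_left (hR ξ (le_of_max_le_left hξ)) (by exact_mod_cast hc.le)
  calc ((M * ‖ξ‖ : ℝ) : EReal) ≤ ((u ξ + c * ((M + b + 1) / c * ‖ξ‖) : ℝ) : EReal) := by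
        rw [EReal.coe_le_coe_iff, ← mul_assoc, mul_div_cancel₀ _ hc.ne']
        linarith [hu ξ, le_of_max_le_right hξ]
    _ ≤ _ := by
        rw [EReal.coe_add]
        exact add_le_add_right hf' _

lemma CoerciveE.isBounded_setOf_lt {g : Eucl n → EReal} (hg : CoerciveE g) (r : ℝ) :
    IsBounded {y | g y < r} := by
  obtain ⟨R, hR⟩ := hg r
  exact isBounded_iff_forall_norm_le.mpr
    ⟨R, fun y hy => le_of_not_ge fun h => (hR y h).not_gt hy⟩

lemma epicomp_le {G : Eucl n → Eucl n} {Y : Set (Eucl n)} (g : Eucl n → EReal) {y : Eucl n}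
    (hy : y ∈ Y) : epicomp G Y g (G y) ≤ g y :=
  iInf₂_le y ⟨hy, rfl⟩

lemma le_epicomp {G : Eucl n → Eucl n} {Y : Set (Eucl n)} {g : Eucl n → EReal} {c : EReal}
    {ξ : Eucl n} (h : ∀ y ∈ Y, G y = ξ → c ≤ g y) : c ≤ epicomp G Y g ξ :=
  le_iInf₂ fun y hy => h y hy.1 hy.2

/-- `g` has the minorant `β - l⁻¹ (φ*(∇φ y) - ⟪a, ∇φ y⟫)`, written with
`φ*(∇φ y) = ⟪y, ∇φ y⟫ - φ y`. As `D(a, y) = φ a + φ*(∇φ y) - ⟪a, ∇φ y⟫`, both the right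
`φ`-prox-boundedness of `g` and the left `φ*`-prox-boundedness of `∇φ ▷ g` reduce to it. -/
def TiltBddBelow (p : Eucl n → ℝ) (G : Eucl n → Eucl n) (g : Eucl n → EReal) (l : ℝ)
    (a : Eucl n) : Prop :=
  ∃ β : ℝ, ∀ y, ((β - l⁻¹ * (⟪y, G y⟫ - p y - ⟪a, G y⟫) : ℝ) : EReal) ≤ g y

section FiniteDGF

variable {p : Eucl n → ℝ} {G : Eucl n → Eucl n} {g : Eucl n → EReal} {l : ℝ}

local notation "φ" => Real.toEReal ∘ p

lemma convexOn_of_convexOnE (h : ConvexOnE univ φ) : ConvexOn ℝ univ p := by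
  refine ⟨convex_univ, fun x _ y _ a b ha hb hab => ?_⟩
  have := h x (mem_univ x) y (mem_univ y) a b ha hb hab
  simp only [Function.comp_apply, ← EReal.coe_mul, ← EReal.coe_add, EReal.coe_le_coe_iff] at this
  simpa only [smul_eq_mul] using this

lemma interior_edom_eq_univ : interior (edom φ) = univ := by
  simp [edom]

lemma breg_eq (x y : Eucl n) : breg φ G x y = ((p x - p y - ⟪G y, x - y⟫ : ℝ) : EReal) := by
  simp [breg, interior_edom_eq_univ, EReal.coe_sub]

lemma fconj_eq_iSup (ξ : Eucl n) : fconj φ ξ = ⨆ x, ((⟪x, ξ⟫ - p x : ℝ) : EReal) := by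
  simp only [fconj, Function.comp_apply, EReal.coe_sub]

lemma coe_inner_sub_le_fconj (x ξ : Eucl n) : ((⟪x, ξ⟫ - p x : ℝ) : EReal) ≤ fconj φ ξ := by
  rw [fconj_eq_iSup]
  exact le_iSup (fun x => ((⟪x, ξ⟫ - p x : ℝ) : EReal)) x

lemma fconj_ne_bot (ξ : Eucl n) : fconj φ ξ ≠ ⊥ :=
  ((EReal.bot_lt_coe _).trans_le (coe_inner_sub_le_fconj 0 ξ)).ne'

lemma coe_toReal_fconj {ξ : Eucl n} (hξ : ξ ∈ edom (fconj φ)) :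
    (((fconj φ ξ).toReal : ℝ) : EReal) = fconj φ ξ :=
  EReal.coe_toReal hξ (fconj_ne_bot ξ)

lemma inner_sub_le_toReal_fconj {ξ : Eucl n} (hξ : ξ ∈ edom (fconj φ)) (x : Eucl n) :
    ⟪x, ξ⟫ - p x ≤ (fconj φ ξ).toReal := by
  have := EReal.toReal_le_toReal (coe_inner_sub_le_fconj x ξ) (EReal.coe_ne_bot _) hξ
  rwa [EReal.toReal_coe] at this

lemma fconj_gradient (hp : ConvexOn ℝ univ p) {y : Eucl n} (hG : HasGradientAt p (G y) y) :
    fconj φ (G y) = ((⟪y, G y⟫ - p y : ℝ) : EReal) := by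
  refine le_antisymm ?_ (coe_inner_sub_le_fconj y (G y))
  rw [fconj_eq_iSup]
  refine iSup_le fun x => EReal.coe_le_coe_iff.mpr ?_
  have := hp.add_inner_le_of_hasGradientAt hG x
  rw [inner_sub_right, real_inner_comm x, real_inner_comm y] at this
  linarith

lemma gradient_mem_edom_fconj (hp : ConvexOn ℝ univ p) {y : Eucl n}
    (hG : HasGradientAt p (G y) y) : G y ∈ edom (fconj φ) := by
  show _ ≠ ⊤
  rw [fconj_gradient hp hG]
  exact EReal.coe_ne_top _

lemma toReal_fconj_gradient (hp : ConvexOn ℝ univ p) {y : Eucl n}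
    (hG : HasGradientAt p (G y) y) : (fconj φ (G y)).toReal = ⟪y, G y⟫ - p y := by
  rw [fconj_gradient hp hG, EReal.toReal_coe]

lemma lowerSemicontinuous_fconj : LowerSemicontinuous (fconj φ) := by
  rw [show fconj φ = fun ξ => ⨆ x, ((⟪x, ξ⟫ - p x : ℝ) : EReal) from funext fconj_eq_iSup]
  exact lowerSemicontinuous_iSup fun x => (continuous_coe_real_ereal.comp
    ((continuous_const.inner continuous_id).sub continuous_const)).lowerSemicontinuous

lemma convexOn_toReal_fconj {s : Set (Eucl n)} (hs : Convex ℝ s) (hsub : s ⊆ edom (fconj φ)) :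
    ConvexOn ℝ s fun ξ => (fconj φ ξ).toReal := by
  refine ⟨hs, fun ζ₁ h₁ ζ₂ h₂ a b ha hb hab => ?_⟩
  have hle : fconj φ (a • ζ₁ + b • ζ₂)
      ≤ ((a * (fconj φ ζ₁).toReal + b * (fconj φ ζ₂).toReal : ℝ) : EReal) := by
    rw [fconj_eq_iSup]
    refine iSup_le fun x => EReal.coe_le_coe_iff.mpr ?_
    have e₁ := inner_sub_le_toReal_fconj (hsub h₁) x
    have e₂ := inner_sub_le_toReal_fconj (hsub h₂) x
    have hpx : p x = a * p x + b * p x := by rw [← add_mul, hab, one_mul]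
    rw [inner_add_right, real_inner_smul_right, real_inner_smul_right]
    nlinarith [mul_le_mul_of_nonneg_left e₁ ha, mul_le_mul_of_nonneg_left e₂ hb]
  have := EReal.toReal_le_toReal hle (fconj_ne_bot _) (EReal.coe_ne_top _)
  rwa [EReal.toReal_coe] at this

lemma oneCoercive_fconj (hp : Continuous p) : OneCoercive (fconj φ) := by
  intro M
  obtain ⟨z, -, hz⟩ := (isCompact_closedBall (0 : Eucl n) |M + 1|).exists_isMaxOn
    ⟨0, by simp⟩ hp.continuousOn
  refine ⟨max 0 (p z), fun ξ hξ => ?_⟩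
  set x := ((M + 1) * ‖ξ‖⁻¹) • ξ
  have hx : p x ≤ p z := hz (by
    rw [Metric.mem_closedBall, dist_zero_right, norm_smul, Real.norm_eq_abs, abs_mul,
      abs_inv, abs_norm, mul_assoc]
    exact mul_le_of_le_one_right (abs_nonneg _) (inv_mul_le_one_of_le₀ le_rfl (norm_nonneg _)))
  have hxξ : ⟪x, ξ⟫ = (M + 1) * ‖ξ‖ := by
    rcases eq_or_ne ξ 0 with rfl | hξ0
    · simp
    · rw [real_inner_smul_left, real_inner_self_eq_norm_sq]
      field_simp
  refine le_trans (EReal.coe_le_coe_iff.mpr ?_) (coe_inner_sub_le_fconj x ξ)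
  rw [hxξ]
  linarith [le_max_right 0 (p z)]

lemma TiltBddBelow.of_lt (hp : ConvexOn ℝ univ p) (hG : ∀ x, HasGradientAt p (G x) x)
    {l₁ l₂ : ℝ} {a : Eucl n} (h : TiltBddBelow p G g l₁ a) (hl₂ : 0 < l₂) (hl : l₂ < l₁)
    (b : Eucl n) : TiltBddBelow p G g l₂ b := by
  obtain ⟨β, hβ⟩ := h
  have hc : 0 < l₂⁻¹ - l₁⁻¹ := sub_pos.mpr (inv_strictAnti₀ hl₂ hl)
  set c := l₂⁻¹ - l₁⁻¹
  set w := l₂⁻¹ • b - l₁⁻¹ • a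
  refine ⟨β - c * p (c⁻¹ • w), fun y => le_trans (EReal.coe_le_coe_iff.mpr ?_) (hβ y)⟩
  -- the gradient inequality at `c⁻¹ • w` absorbs the change of slope and of parameter
  have hgrad := hp.add_inner_le_of_hasGradientAt (hG y) (c⁻¹ • w)
  have hw : c * ⟪G y, c⁻¹ • w - y⟫ = l₂⁻¹ * ⟪b, G y⟫ - l₁⁻¹ * ⟪a, G y⟫ - c * ⟪y, G y⟫ := by
    rw [inner_sub_right, real_inner_smul_right, mul_sub, ← mul_assoc, mul_inv_cancel₀ hc.ne',
      one_mul, inner_sub_right, real_inner_smul_right, real_inner_smul_right,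
      real_inner_comm b, real_inner_comm a, real_inner_comm y]
  nlinarith [mul_le_mul_of_nonneg_left hgrad hc.le]

lemma tiltBddBelow_iff_benvR_ne_bot (x : Eucl n) :
    TiltBddBelow p G g l x ↔ benvR φ G l g x ≠ ⊥ := by
  have hsplit : ∀ y, l⁻¹ * (p x - p y - ⟪G y, x - y⟫)
      = l⁻¹ * p x + l⁻¹ * (⟪y, G y⟫ - p y - ⟪x, G y⟫) := fun y => by
    rw [inner_sub_right, real_inner_comm x, real_inner_comm y]
    ring
  constructor
  · rintro ⟨β, hβ⟩
    refine ne_bot_of_le_ne_bot (EReal.coe_ne_bot (β + l⁻¹ * p x)) (le_iInf₂ fun y _ => ?_)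
    rw [breg_eq, ← EReal.coe_mul, hsplit, ← EReal.coe_sub_le_iff_le_add_coe]
    convert hβ y using 2
    ring
  · intro h
    obtain ⟨β, -, hβ⟩ := EReal.lt_iff_exists_real_btwn.mp (bot_lt_iff_ne_bot.mpr h)
    refine ⟨β - l⁻¹ * p x, fun y => ?_⟩
    have := hβ.le.trans
      (iInf₂_le y (by simp [interior_edom_eq_univ]) : benvR φ G l g x ≤ _)
    rw [breg_eq, ← EReal.coe_mul, hsplit, ← EReal.coe_sub_le_iff_le_add_coe] at this
    convert this using 2
    ring

lemma le_epicomp_of_tilt (hp : ConvexOn ℝ univ p) (hG : ∀ x, HasGradientAt p (G x) x)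
    {a : Eucl n} {β : ℝ}
    (hβ : ∀ y, ((β - l⁻¹ * (⟪y, G y⟫ - p y - ⟪a, G y⟫) : ℝ) : EReal) ≤ g y) (ξ : Eucl n) :
    ((β - l⁻¹ * ((fconj φ ξ).toReal - ⟪a, ξ⟫) : ℝ) : EReal) ≤ epicomp G univ g ξ :=
  le_epicomp fun y _ hy => by
    subst hy
    rw [toReal_fconj_gradient hp (hG y)]
    exact hβ y

lemma breg_fconj_eq {φs : Eucl n → Eucl n} {ξ η : Eucl n} (hξ : ξ ∈ edom (fconj φ))
    (hη : η ∈ interior (edom (fconj φ))) :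
    breg (fconj φ) φs ξ η
      = (((fconj φ ξ).toReal - (fconj φ η).toReal - ⟪φs η, ξ - η⟫ : ℝ) : EReal) := by
  rw [breg, if_pos hη]
  conv_lhs => rw [← coe_toReal_fconj hξ, ← coe_toReal_fconj (interior_subset hη)]
  norm_cast

lemma tiltBddBelow_iff_benv_ne_bot (hp : ConvexOn ℝ univ p)
    (hG : ∀ x, HasGradientAt p (G x) x) {φs : Eucl n → Eucl n} {η : Eucl n}
    (hη : η ∈ interior (edom (fconj φ))) :
    TiltBddBelow p G g l (φs η) ↔ benv (fconj φ) φs l (epicomp G univ g) η ≠ ⊥ := by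
  set κ := l⁻¹ * (⟪φs η, η⟫ - (fconj φ η).toReal)
  constructor
  · rintro ⟨β, hβ⟩
    refine ne_bot_of_le_ne_bot (EReal.coe_ne_bot (β + κ)) (le_iInf₂ fun ξ hξ => ?_)
    rw [breg_fconj_eq hξ hη, ← EReal.coe_mul, ← EReal.coe_sub_le_iff_le_add_coe]
    convert le_epicomp_of_tilt hp hG hβ ξ using 2
    rw [inner_sub_right]
    ring
  · intro h
    obtain ⟨β, -, hβ⟩ := EReal.lt_iff_exists_real_btwn.mp (bot_lt_iff_ne_bot.mpr h)
    refine ⟨β - κ, fun y => ?_⟩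
    have hGy := gradient_mem_edom_fconj hp (hG y)
    have := (hβ.le.trans (iInf₂_le (G y) hGy)).trans
      (add_le_add_left (epicomp_le g (mem_univ y)) _)
    rw [breg_fconj_eq hGy hη, ← EReal.coe_mul, ← EReal.coe_sub_le_iff_le_add_coe,
      toReal_fconj_gradient hp (hG y)] at this
    convert this using 2
    rw [inner_sub_right]
    ring

lemma benvR_le (x y : Eucl n) :
    benvR φ G l g x ≤ g y + ((l⁻¹ * (p x - p y - ⟪G y, x - y⟫) : ℝ) : EReal) := by
  rw [EReal.coe_mul, ← breg_eq]
  exact iInf₂_le y (by simp [interior_edom_eq_univ])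

lemma benvR_ne_top {y₀ : Eucl n} (hy₀ : g y₀ ≠ ⊤) (x : Eucl n) : benvR φ G l g x ≠ ⊤ :=
  ne_top_of_le_ne_top (EReal.add_ne_top hy₀ (EReal.coe_ne_top _)) (benvR_le x y₀)

lemma concaveOn_toReal_benvR_sub (hfin : ∀ x, benvR φ G l g x ≠ ⊤ ∧ benvR φ G l g x ≠ ⊥) :
    ConcaveOn ℝ univ fun x => (benvR φ G l g x).toReal - l⁻¹ * p x := by
  set e := fun x => (benvR φ G l g x).toReal
  set D := fun x y => p x - p y - ⟪G y, x - y⟫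
  -- `D x y - p x` is affine in `x`, so each `g y + l⁻¹ D x y - l⁻¹ p x` is concave in `x`
  have hmin : ∀ x y, ((e x - l⁻¹ * D x y : ℝ) : EReal) ≤ g y := fun x y => by
    rw [EReal.coe_sub_le_iff_le_add_coe, EReal.coe_toReal (hfin x).1 (hfin x).2]
    exact benvR_le x y
  refine ⟨convex_univ, fun x₁ _ x₂ _ a b ha hb hab => ?_⟩
  have hD : ∀ y, D (a • x₁ + b • x₂) y - p (a • x₁ + b • x₂)
      = a * (D x₁ y - p x₁) + b * (D x₂ y - p x₂) := fun y => by
    have hv : a • x₁ + b • x₂ - y = a • (x₁ - y) + b • (x₂ - y) := by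
      rw [smul_sub, smul_sub]
      nth_rewrite 1 [← one_smul ℝ y]
      rw [← hab, add_smul]
      abel
    simp only [D, hv, inner_add_right, real_inner_smul_right]
    linear_combination (p y) * hab
  have key : ((a * (e x₁ - l⁻¹ * p x₁) + b * (e x₂ - l⁻¹ * p x₂)
      + l⁻¹ * p (a • x₁ + b • x₂) : ℝ) : EReal) ≤ benvR φ G l g (a • x₁ + b • x₂) := by
    refine le_iInf₂ fun y _ => ?_
    rw [breg_eq, ← EReal.coe_mul, ← EReal.coe_sub_le_iff_le_add_coe]
    refine le_trans (EReal.coe_le_coe_iff.mpr ?_) (max_le (hmin x₁ y) (hmin x₂ y))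
    set m := max (e x₁ - l⁻¹ * D x₁ y) (e x₂ - l⁻¹ * D x₂ y)
    have h₁ := mul_le_mul_of_nonneg_left
      (le_max_left (e x₁ - l⁻¹ * D x₁ y) (e x₂ - l⁻¹ * D x₂ y)) ha
    have h₂ := mul_le_mul_of_nonneg_left
      (le_max_right (e x₁ - l⁻¹ * D x₁ y) (e x₂ - l⁻¹ * D x₂ y)) hb
    have := congrArg (l⁻¹ * ·) (hD y)
    simp only [D] at this h₁ h₂ ⊢
    linear_combination h₁ + h₂ - this + m * hab
  have := EReal.toReal_le_toReal key (EReal.coe_ne_bot _) (hfin _).1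
  rw [EReal.toReal_coe] at this
  simp only [smul_eq_mul]
  linarith

lemma locallyLipschitz_toReal_benvR (hp : ConvexOn ℝ univ p) (hl : 0 < l)
    (hfin : ∀ x, benvR φ G l g x ≠ ⊤ ∧ benvR φ G l g x ≠ ⊥) :
    LocallyLipschitz fun x => (benvR φ G l g x).toReal := by
  have hp' : LocallyLipschitz fun x => l⁻¹ * p x := by
    simpa [smul_eq_mul] using (hp.smul (inv_nonneg.mpr hl.le)).locallyLipschitz
  simpa using (concaveOn_toReal_benvR_sub hfin).locallyLipschitz.add hp'

section Sum

variable {lam : ℝ} {x₀ : Eucl n}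

lemma coe_mul_epicomp_ne_bot (hp : ConvexOn ℝ univ p) (hG : ∀ x, HasGradientAt p (G x) x)
    {β : ℝ} (hβ : ∀ y, ((β - l⁻¹ * (⟪y, G y⟫ - p y - ⟪x₀, G y⟫) : ℝ) : EReal) ≤ g y)
    (hlam : 0 ≤ lam) (ξ : Eucl n) : (lam : EReal) * epicomp G univ g ξ ≠ ⊥ := by
  have := mul_le_mul_of_nonneg_left (le_epicomp_of_tilt hp hG hβ ξ)
    (show (0 : EReal) ≤ lam by exact_mod_cast hlam)
  rw [← EReal.coe_mul] at this
  exact ne_bot_of_le_ne_bot (EReal.coe_ne_bot _) this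

lemma coe_add_mul_fconj_le (hp : ConvexOn ℝ univ p) (hG : ∀ x, HasGradientAt p (G x) x)
    {β : ℝ} (hβ : ∀ y, ((β - l⁻¹ * (⟪y, G y⟫ - p y - ⟪x₀, G y⟫) : ℝ) : EReal) ≤ g y)
    (hlam : 0 < lam) (ξ : Eucl n) :
    ((lam * β + lam / l * ⟪x₀, ξ⟫ : ℝ) : EReal) + ((1 - lam / l : ℝ) : EReal) * fconj φ ξ
      ≤ (lam : EReal) * epicomp G univ g ξ + fconj φ ξ := by
  have hec := le_epicomp_of_tilt hp hG hβ ξ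
  by_cases hξ : ξ ∈ edom (fconj φ)
  · obtain ⟨v, hv⟩ : ∃ v : ℝ, fconj φ ξ = v := ⟨_, (coe_toReal_fconj hξ).symm⟩
    rw [hv, EReal.toReal_coe] at hec
    rw [hv]
    calc ((lam * β + lam / l * ⟪x₀, ξ⟫ : ℝ) : EReal) + ((1 - lam / l : ℝ) : EReal) * v
        = (lam : EReal) * ((β - l⁻¹ * (v - ⟪x₀, ξ⟫) : ℝ) : EReal) + v := by
          rw [← EReal.coe_mul, ← EReal.coe_mul, ← EReal.coe_add, ← EReal.coe_add]
          congr 1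
          ring
      _ ≤ _ := add_le_add_left (mul_le_mul_of_nonneg_left hec (by exact_mod_cast hlam.le)) _
  · rw [not_ne_iff.mp hξ, EReal.add_top_of_ne_bot (coe_mul_epicomp_ne_bot hp hG hβ hlam.le ξ)]
    exact le_top

lemma oneCoercive_coe_mul_epicomp_add_fconj (hp : ConvexOn ℝ univ p)
    (hG : ∀ x, HasGradientAt p (G x) x) (h : TiltBddBelow p G g l x₀) (hlam : 0 < lam)
    (hll : lam < l) :
    OneCoercive fun ξ => (lam : EReal) * epicomp G univ g ξ + fconj φ ξ := by
  obtain ⟨β, hβ⟩ := h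
  have hpc : Continuous p := continuous_iff_continuousAt.mpr fun x => (hG x).continuousAt
  have hc : 0 < 1 - lam / l := sub_pos.mpr ((div_lt_one (hlam.trans hll)).mpr hll)
  refine ((oneCoercive_fconj hpc).coe_add_coe_mul hc (a := |lam * β|) (b := lam / l * ‖x₀‖)
    fun ξ => ?_).mono (coe_add_mul_fconj_le hp hG hβ hlam)
  have := mul_le_mul_of_nonneg_left (neg_le_of_abs_le (abs_real_inner_le_norm x₀ ξ))
    (div_pos hlam (hlam.trans hll)).le
  nlinarith [neg_abs_le (lam * β)]

lemma lowerSemicontinuous_coe_mul_epicomp_add_fconj (hp : ConvexOn ℝ univ p)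
    (hG : ∀ x, HasGradientAt p (G x) x) (h : TiltBddBelow p G g l x₀) (hlam : 0 < lam)
    (hll : lam < l) (hlsc : LowerSemicontinuousOn (epicomp G univ g) (edom (fconj φ))) :
    LowerSemicontinuous fun ξ => (lam : EReal) * epicomp G univ g ξ + fconj φ ξ := by
  obtain ⟨β, hβ⟩ := h
  have htop : ∀ ξ ∉ edom (fconj φ), (lam : EReal) * epicomp G univ g ξ + fconj φ ξ = ⊤ :=
    fun ξ hξ => by
      rw [not_ne_iff.mp hξ, EReal.add_top_of_ne_bot (coe_mul_epicomp_ne_bot hp hG hβ hlam.le ξ)]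
  intro ξ₀
  by_cases hξ₀ : ξ₀ ∈ edom (fconj φ)
  · refine LowerSemicontinuousWithinAt.lowerSemicontinuousAt_of_eq_top ?_ htop
    exact (LowerSemicontinuousWithinAt.coe_mul (hlsc ξ₀ hξ₀) hlam).add'
      (lowerSemicontinuous_fconj.lowerSemicontinuousWithinAt _ ξ₀)
      (EReal.continuousAt_add (.inr (fconj_ne_bot ξ₀)) (.inr hξ₀))
  -- off `dom φ*` the coercive minorant `u + (1 - λ/l) φ*` already takes the value `⊤`
  · have hc : 0 < 1 - lam / l := sub_pos.mpr ((div_lt_one (hlam.trans hll)).mpr hll)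
    have hu : Continuous fun ξ => ((lam * β + lam / l * ⟪x₀, ξ⟫ : ℝ) : EReal) :=
      continuous_coe_real_ereal.comp (by fun_prop)
    refine LowerSemicontinuousAt.of_minorant ?_ (coe_add_mul_fconj_le hp hG hβ hlam) ?_
    · rw [← lowerSemicontinuousWithinAt_univ_iff]
      exact (hu.lowerSemicontinuous.lowerSemicontinuousWithinAt _ _).add'
        ((lowerSemicontinuous_fconj.lowerSemicontinuousWithinAt _ ξ₀).coe_mul hc)
        (EReal.continuousAt_add (.inl (EReal.coe_ne_top _)) (.inl (EReal.coe_ne_bot _)))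
    · rw [htop ξ₀ hξ₀, not_ne_iff.mp hξ₀, EReal.coe_mul_top_of_pos hc,
        EReal.add_top_of_ne_bot (EReal.coe_ne_bot _)]

end Sum

lemma lowerSemicontinuousAt_epicomp (hp : ConvexOn ℝ univ p)
    (hG : ∀ x, HasGradientAt p (G x) x) (hg : LowerSemicontinuous g) {ξ₀ : Eucl n}
    {U : Set (Eucl n)} (hU : U ∈ 𝓝 ξ₀) (hbdd : ∀ r : ℝ, IsBounded {y | G y ∈ U ∧ g y < r}) :
    LowerSemicontinuousAt (epicomp G univ g) ξ₀ := by
  intro b hb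
  by_contra hcon
  obtain ⟨r, hbr, hr⟩ := EReal.lt_iff_exists_real_btwn.mp hb
  obtain ⟨ξ, hξ, hξb⟩ := frequently_iff_seq_forall.mp (not_eventually.mp hcon)
  have hfiber : ∀ k, ∃ y, G y = ξ k ∧ g y < r := fun k => by
    have := (not_lt.mp (hξb k)).trans_lt hbr
    simpa [epicomp, iInf_lt_iff] using this
  choose Y hYξ hYr using hfiber
  have hGY : Tendsto (fun k => G (Y k)) atTop (𝓝 ξ₀) := by simpa [hYξ] using hξ
  have hfreq : ∃ᶠ k in atTop, Y k ∈ {y | G y ∈ U ∧ g y < r} :=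
    ((hGY.eventually_mem hU).mono fun k hk => ⟨hk, hYr k⟩).frequently
  obtain ⟨y₁, -, σ, hσ, hlim⟩ := tendsto_subseq_of_frequently_bounded (hbdd r) hfreq
  have hy₁ : G y₁ = ξ₀ := hp.gradient_eq_of_tendsto hG hlim (hGY.comp hσ.tendsto_atTop)
  have hgy₁ : g y₁ ≤ r := le_of_not_gt fun h =>
    let ⟨k, hk⟩ := (hlim.eventually (hg y₁ r h)).exists
    (hYr (σ k)).not_gt hk
  exact hr.not_ge (hy₁ ▸ (epicomp_le g (mem_univ y₁)).trans hgy₁)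

lemma isBounded_setOf_norm_gradient_le (hp : ConvexOn ℝ univ p)
    (hG : ∀ x, HasGradientAt p (G x) x) (h1 : OneCoercive φ) (K : ℝ) :
    IsBounded {y | ‖G y‖ ≤ K} := by
  obtain ⟨R, hR⟩ := h1 (K + 1)
  refine isBounded_iff_forall_norm_le.mpr ⟨max R (p 0), fun y hy => ?_⟩
  by_contra! hlt
  have hgrow := EReal.coe_le_coe_iff.mp (hR y (le_of_max_le_left hlt.le))
  -- the gradient inequality at `0` caps the growth of `p` at rate `‖G y‖ ≤ K`
  have hgrad := hp.add_inner_le_of_hasGradientAt (hG y) 0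
  have hcs := real_inner_le_norm (G y) y
  rw [zero_sub, inner_neg_right] at hgrad
  nlinarith [mul_le_mul_of_nonneg_right (show ‖G y‖ ≤ K from hy) (norm_nonneg y),
    le_max_right R (p 0)]

lemma eventually_fconj_le_of_isOpen (hopen : IsOpen (edom (fconj φ))) {ξ₀ : Eucl n}
    (hξ₀ : ξ₀ ∈ edom (fconj φ)) : ∃ C : ℝ, ∀ᶠ η in 𝓝 ξ₀, fconj φ η ≤ C := by
  obtain ⟨δ, hδ, hball⟩ := Metric.isOpen_iff.mp hopen ξ₀ hξ₀
  have hcont : ContinuousAt (fun ξ => (fconj φ ξ).toReal) ξ₀ :=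
    ((convexOn_toReal_fconj (convex_ball ξ₀ δ) hball).continuousOn
      Metric.isOpen_ball).continuousAt (Metric.ball_mem_nhds ξ₀ hδ)
  refine ⟨(fconj φ ξ₀).toReal + 1, ?_⟩
  filter_upwards [hcont.eventually (gt_mem_nhds (lt_add_one _)), hopen.mem_nhds hξ₀]
    with η hlt hη
  rw [← coe_toReal_fconj hη]
  exact EReal.coe_le_coe_iff.mpr hlt.le

lemma isBounded_setOf_gradient_mem_ball (hp : ConvexOn ℝ univ p)
    (hG : ∀ x, HasGradientAt p (G x) x) {ξ₀ : Eucl n} {ε C : ℝ} (hε : 0 < ε)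
    (hC : ∀ η ∈ Metric.closedBall ξ₀ (2 * ε), fconj φ η ≤ C) :
    IsBounded {y | G y ∈ Metric.ball ξ₀ ε} := by
  refine isBounded_iff_forall_norm_le.mpr ⟨(C + p 0) / ε, fun y hy => ?_⟩
  have hy' : dist (G y) ξ₀ < ε := hy
  -- test `φ*` at `∇φ y` pushed by `ε` in the direction of `y`
  have hstep : ‖(ε * ‖y‖⁻¹) • y‖ ≤ ε := by
    rw [norm_smul, Real.norm_eq_abs, abs_of_nonneg (by positivity), mul_assoc]
    exact mul_le_of_le_one_right hε.le (inv_mul_le_one_of_le₀ le_rfl (norm_nonneg _))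
  have hη : G y + (ε * ‖y‖⁻¹) • y ∈ Metric.closedBall ξ₀ (2 * ε) := by
    rw [Metric.mem_closedBall, two_mul]
    calc dist (G y + (ε * ‖y‖⁻¹) • y) ξ₀
        ≤ dist (G y + (ε * ‖y‖⁻¹) • y) (G y) + dist (G y) ξ₀ := dist_triangle _ _ _
      _ ≤ ε + ε := add_le_add (by simpa [dist_eq_norm] using hstep) hy'.le
  have hinner : ⟪y, G y + (ε * ‖y‖⁻¹) • y⟫ = ⟪y, G y⟫ + ε * ‖y‖ := by
    rcases eq_or_ne y 0 with rfl | hy0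
    · simp
    · rw [inner_add_right, real_inner_smul_right, real_inner_self_eq_norm_sq]
      field_simp
  have hconj := EReal.coe_le_coe_iff.mp ((coe_inner_sub_le_fconj y _).trans (hC _ hη))
  have hgrad := hp.add_inner_le_of_hasGradientAt (hG y) 0
  rw [zero_sub, inner_neg_right, real_inner_comm] at hgrad
  rw [le_div_iff₀ hε]
  linarith

lemma lowerSemicontinuousOn_epicomp (hp : ConvexOn ℝ univ p)
    (hG : ∀ x, HasGradientAt p (G x) x) (hg : LowerSemicontinuous g)
    (h : IsOpen (edom (fconj φ)) ∨ CoerciveE g ∨ OneCoercive φ) :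
    LowerSemicontinuousOn (epicomp G univ g) (edom (fconj φ)) := by
  intro ξ₀ hξ₀
  refine LowerSemicontinuousAt.lowerSemicontinuousWithinAt _ ?_
  rcases h with hopen | hcoer | h1
  · obtain ⟨C, hC⟩ := eventually_fconj_le_of_isOpen hopen hξ₀
    obtain ⟨δ, hδ, hball⟩ := Metric.eventually_nhds_iff.mp hC
    have hε : 0 < δ / 3 := by positivity
    have hbdd : IsBounded {y | G y ∈ Metric.ball ξ₀ (δ / 3)} :=
      isBounded_setOf_gradient_mem_ball hp hG hε fun η hη =>
        hball (by linarith [Metric.mem_closedBall.mp hη])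
    exact lowerSemicontinuousAt_epicomp hp hG hg (Metric.ball_mem_nhds ξ₀ hε) fun r =>
      hbdd.subset fun y hy => hy.1
  · exact lowerSemicontinuousAt_epicomp (U := univ) hp hG hg univ_mem fun r =>
      (CoerciveE.isBounded_setOf_lt hcoer r).subset fun y hy => hy.2
  · refine lowerSemicontinuousAt_epicomp hp hG hg (Metric.ball_mem_nhds ξ₀ one_pos) fun r =>
      (isBounded_setOf_norm_gradient_le hp hG h1 (‖ξ₀‖ + 1)).subset fun y hy => ?_
    have := Metric.mem_ball.mp hy.1
    rw [dist_eq_norm] at this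
    show ‖G y‖ ≤ ‖ξ₀‖ + 1
    linarith [norm_le_norm_add_norm_sub' (G y) ξ₀]

end FiniteDGF

/-- Suppose `dom φ = ℝⁿ` and `g : ℝⁿ → ℝ̄` is proper and right
`φ`-prox-bounded with threshold `λ̄_g`.  For every `λ ∈ (0, λ̄_g)`:
(i) `env*_λ g : ℝⁿ → ℝ` is real-valued and locally Lipschitz continuous;
(ii) if `φ` is Legendre then `(∇φ ▷ g)|_{dom φ*}` is (left) `φ*`-prox-bounded with the
same threshold `λ̄_g` (here `φs` is any gradient map making `φ*` a dgf);
(iii) `λ(∇φ ▷ g) + φ*` is 1-coercive, and it is lsc on all of `ℝⁿ` provided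
`(∇φ ▷ g)|_{dom φ*}` is lsc; for the latter it suffices that `g` be lsc and that either
`φ` be Legendre with `dom φ*` open, or `g` be coercive, or `φ` be 1-coercive. -/
theorem mainprop_right {n : ℕ} (φ : Eucl n → EReal) (φ' : Eucl n → Eucl n)
    (hφ : IsDGF φ φ') (hfull : edom φ = Set.univ)
    (g : Eucl n → EReal) (hproper : ProperOn Set.univ g)
    (lam : ℝ) (hlam : 0 < lam) (hthr : ENNReal.ofReal lam < pbThresholdR φ φ' g) :
    let ec : Eucl n → EReal := epicomp φ' (interior (edom φ)) g
    -- (i)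
    ((∀ x : Eucl n, benvR φ φ' lam g x ≠ ⊤ ∧ benvR φ φ' lam g x ≠ ⊥) ∧
      LocallyLipschitz (fun x => (benvR φ φ' lam g x).toReal)) ∧
    -- (ii)
    (Legendre φ φ' →
      ∀ φs : Eucl n → Eucl n, IsDGF (fconj φ) φs →
        (∃ μ : ℝ, 0 < μ ∧ ProxBddBelow (fconj φ) φs μ ec) ∧
        pbThreshold (fconj φ) φs ec = pbThresholdR φ φ' g) ∧
    -- (iii)
    (OneCoercive (fun ξ => (lam : EReal) * ec ξ + fconj φ ξ) ∧
      (LowerSemicontinuousOn ec (edom (fconj φ)) →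
        LowerSemicontinuous (fun ξ => (lam : EReal) * ec ξ + fconj φ ξ)) ∧
      (LowerSemicontinuous g →
        ((Legendre φ φ' ∧ IsOpen (edom (fconj φ))) ∨ CoerciveE g ∨ OneCoercive φ) →
        LowerSemicontinuousOn ec (edom (fconj φ)))) := by
  obtain ⟨p, rfl⟩ : ∃ p : Eucl n → ℝ, φ = Real.toEReal ∘ p := ⟨fun x => (φ x).toReal,
    funext fun x => (EReal.coe_toReal (hfull.symm ▸ mem_univ x : x ∈ edom φ) (hφ.ne_bot x)).symm⟩
  have hp := convexOn_of_convexOnE hφ.convex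
  have hG : ∀ x, HasGradientAt p (φ' x) x := fun x => by
    simpa using hφ.diff x (by simp [interior_edom_eq_univ])
  rw [interior_edom_eq_univ]
  obtain ⟨y₀, -, hy₀⟩ := hproper.1
  obtain ⟨l, hll, x₀, -, hx₀⟩ := exists_lt_of_ofReal_lt_biSup hthr
  have htilt := (tiltBddBelow_iff_benvR_ne_bot x₀).mpr hx₀
  have hfin : ∀ x, benvR (Real.toEReal ∘ p) φ' lam g x ≠ ⊤
      ∧ benvR (Real.toEReal ∘ p) φ' lam g x ≠ ⊥ := fun x => ⟨benvR_ne_top hy₀ x,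
      (tiltBddBelow_iff_benvR_ne_bot x).mp (htilt.of_lt hp hG hlam hll x)⟩
  refine ⟨⟨hfin, locallyLipschitz_toReal_benvR hp hlam hfin⟩, fun _ φs hφs => ?_,
    oneCoercive_coe_mul_epicomp_add_fconj hp hG htilt hlam hll,
    lowerSemicontinuous_coe_mul_epicomp_add_fconj hp hG htilt hlam hll,
    fun hg h => lowerSemicontinuousOn_epicomp hp hG hg (h.imp_left And.right)⟩
  obtain ⟨η, hη⟩ := hφs.int_nonempty
  refine ⟨⟨lam, hlam, η, hη, (tiltBddBelow_iff_benv_ne_bot hp hG hη).mp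
    (htilt.of_lt hp hG hlam hll _)⟩, le_antisymm ?_ ?_⟩
  · exact biSup_ofReal_le_of_forall_lt fun l₁ l₂ h₂ h₁₂ ⟨η, hη, h⟩ =>
      ⟨0, EReal.coe_ne_top _, (tiltBddBelow_iff_benvR_ne_bot 0).mp
        (((tiltBddBelow_iff_benv_ne_bot hp hG hη).mpr h).of_lt hp hG h₂ h₁₂ 0)⟩
  · exact biSup_ofReal_le_of_forall_lt fun l₁ l₂ h₂ h₁₂ ⟨x, _, h⟩ =>
      ⟨η, hη, (tiltBddBelow_iff_benv_ne_bot hp hG hη).mp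
        (((tiltBddBelow_iff_benvR_ne_bot x).mpr h).of_lt hp hG h₂ h₁₂ _)⟩

end BregmanPaper
end
end
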